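/- arXiv:1803.10186 — 16 statements merged into one kernel-verified Lean document; each statement's English description precedes it below -/
import Mathlib

section
/- Let A be an n×n complex matrix with index k (the smallest nonnegative integer with rank(A^k) = rank(A^{k+1})). Then there exists a unique n×n matrix X satisfying X * A^(k+1) = A^k, A * X * X = X, and (A*X)^* = A*X (i.e., A*X is Hermitian). This unique X is called the core-EP inverse of A. -/
open Matrix

noncomputable def matIndex {n : ℕ} (M : Matrix (Fin n) (Fin n) ℂ) : ℕ :=
  sInf {j | (M ^ j).rank = (M ^ (j + 1)).rank}

def IsCoreEP {n : ℕ} (M X : Matrix (Fin n) (Fin n) ℂ) : Prop :=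
  X * M ^ (matIndex M + 1) = M ^ (matIndex M) ∧ M * X * X = X ∧ (M * X)ᴴ = M * X

def IsMP {m n : ℕ} (A : Matrix (Fin m) (Fin n) ℂ) (X : Matrix (Fin n) (Fin m) ℂ) : Prop :=
  A * X * A = A ∧ X * A * X = X ∧ (A * X)ᴴ = A * X ∧ (X * A)ᴴ = X * A

def IsDrazin {n : ℕ} (M X : Matrix (Fin n) (Fin n) ℂ) : Prop :=
  M * X = X * M ∧ X * M * X = X ∧ M ^ (matIndex M + 1) * X = M ^ (matIndex M)

/-!
Uniqueness is pure algebra in a monoid with involution: `x * a ^ (k + 1) = a ^ k` and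
`a * y * y = y` give `x * (a * y) = y`, so the self-adjoint idempotents `a * x` and `a * y` absorb
each other and coincide, whence `x = x * (a * x) = x * (a * y) = y`.

For existence, `rank (A ^ k) = rank (A ^ (k + 1))` means that `A` maps `U = range (A ^ k)` onto
itself, hence bijectively. Then `X = (A|_U)⁻¹ ∘ P_U`, with `P_U` the orthogonal projection onto `U`,
satisfies `A * X = P_U`, and the three identities follow.
-/

def IsCoreEPAt {R : Type*} [Monoid R] [Star R] (k : ℕ) (a x : R) : Prop :=
  x * a ^ (k + 1) = a ^ k ∧ a * x * x = x ∧ IsSelfAdjoint (a * x)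

section Monoid
variable {R : Type*} [Monoid R]

theorem pow_mul_pow_succ_eq_of_mul_mul_self_eq {a x : R} (h : a * x * x = x) (m : ℕ) :
    a ^ m * x ^ (m + 1) = x := by
  induction m with
  | zero => simp
  | succ m ih =>
    calc a ^ (m + 1) * x ^ (m + 1 + 1) = a ^ m * (a * x * x * x ^ m) := by
          rw [pow_succ a, pow_succ' x, pow_succ' x]
          simp only [mul_assoc]
      _ = x := by rw [h, ← pow_succ', ih]

theorem mul_mul_eq_of_mul_pow_succ_eq {a x y : R} {k : ℕ} (hx : x * a ^ (k + 1) = a ^ k)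
    (hy : a * y * y = y) : x * (a * y) = y := by
  calc x * (a * y) = x * (a * (a ^ k * y ^ (k + 1))) := by
        rw [pow_mul_pow_succ_eq_of_mul_mul_self_eq hy]
    _ = x * a ^ (k + 1) * y ^ (k + 1) := by simp only [pow_succ', mul_assoc]
    _ = y := by rw [hx, pow_mul_pow_succ_eq_of_mul_mul_self_eq hy]

end Monoid

theorem IsSelfAdjoint.eq_of_mul_eq_of_mul_eq {R : Type*} [Mul R] [StarMul R] {p q : R}
    (hp : IsSelfAdjoint p) (hq : IsSelfAdjoint q) (hpq : p * q = q) (hqp : q * p = p) :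
    p = q :=
  calc p = star (q * p) := by rw [hqp, hp.star_eq]
    _ = q := by rw [star_mul, hp.star_eq, hq.star_eq, hpq]

namespace IsCoreEPAt
variable {R : Type*} [Monoid R] [StarMul R] {k : ℕ} {a x y : R}

theorem unique (hx : IsCoreEPAt k a x) (hy : IsCoreEPAt k a y) : x = y := by
  obtain ⟨hx₁, hx₂, hx₃⟩ := hx
  obtain ⟨hy₁, hy₂, hy₃⟩ := hy
  have hax : a * x = a * y := by
    refine hx₃.eq_of_mul_eq_of_mul_eq hy₃ ?_ ?_
    · rw [mul_assoc, mul_mul_eq_of_mul_pow_succ_eq hx₁ hy₂]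
    · rw [mul_assoc, mul_mul_eq_of_mul_pow_succ_eq hy₁ hx₂]
  calc x = x * (a * x) := (mul_mul_eq_of_mul_pow_succ_eq hx₁ hx₂).symm
    _ = y := by rw [hax, mul_mul_eq_of_mul_pow_succ_eq hx₁ hy₂]

theorem of_map {S F : Type*} [Monoid S] [StarMul S] [FunLike F R S] [MonoidHomClass F R S]
    [StarHomClass F R S] {φ : F} (hφ : Function.Injective φ) (h : IsCoreEPAt k (φ a) (φ x)) :
    IsCoreEPAt k a x := by
  obtain ⟨h₁, h₂, h₃⟩ := h
  refine ⟨hφ ?_, hφ ?_, hφ ?_⟩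
  · rwa [map_mul, map_pow, map_pow]
  · rwa [map_mul, map_mul]
  · rw [map_star, map_mul]
    exact h₃

end IsCoreEPAt

section InnerProductSpace
variable {𝕜 E : Type*} [RCLike 𝕜] [NormedAddCommGroup E] [InnerProductSpace 𝕜 E]

theorem ContinuousLinearMap.exists_mul_eq_starProjection (f : E →L[𝕜] E) (U : Submodule 𝕜 E)
    [FiniteDimensional 𝕜 U] (hU : U.map (f : E →ₗ[𝕜] E) = U) :
    ∃ g : E →L[𝕜] E, f * g = U.starProjection ∧ (∀ x, g x ∈ U) ∧ ∀ u ∈ U, g (f u) = u := by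
  have hmaps : ∀ u ∈ U, f u ∈ U := fun u hu => hU ▸ Submodule.mem_map_of_mem hu
  set φ := (f : E →ₗ[𝕜] E).restrict hmaps
  have hsurj : Function.Surjective φ := by
    rintro ⟨v, hv⟩
    obtain ⟨u, hu, rfl⟩ := (hU.symm ▸ hv : v ∈ U.map (f : E →ₗ[𝕜] E))
    exact ⟨⟨u, hu⟩, rfl⟩
  set e := LinearEquiv.ofBijective φ ⟨LinearMap.injective_iff_surjective.2 hsurj, hsurj⟩
  have hfe : ∀ v : U, f (e.symm v) = v := fun v => congrArg Subtype.val (e.apply_symm_apply v)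
  refine ⟨U.subtypeL ∘L (e.symm.toContinuousLinearEquiv : U →L[𝕜] U) ∘L
    U.orthogonalProjectionOnto, ?_, fun x => (e.symm _).2, fun u hu => ?_⟩
  · ext1 x
    exact hfe _
  · have : U.orthogonalProjectionOnto (f u) = e ⟨u, hu⟩ :=
      Submodule.orthogonalProjectionOnto_mem_subspace_eq_self ⟨f u, hmaps u hu⟩
    simp [this]

theorem ContinuousLinearMap.exists_isCoreEPAt [CompleteSpace E] (f : E →L[𝕜] E) {k : ℕ}
    [FiniteDimensional 𝕜 (LinearMap.range (f ^ k).toLinearMap)]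
    (h : LinearMap.range (f ^ (k + 1)).toLinearMap = LinearMap.range (f ^ k).toLinearMap) :
    ∃ g, IsCoreEPAt k f g := by
  set U := LinearMap.range (f ^ k).toLinearMap
  have hU : U.map (f : E →ₗ[𝕜] E) = U := by
    rw [← LinearMap.range_comp, ← h, pow_succ']
    rfl
  obtain ⟨g, hfg, hgU, hgf⟩ := f.exists_mul_eq_starProjection U hU
  refine ⟨g, ?_, ?_, ?_⟩
  · ext1 x
    rw [mul_apply_eq_comp, pow_succ', mul_apply_eq_comp]
    exact hgf _ (LinearMap.mem_range_self (f ^ k).toLinearMap x)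
  · ext1 x
    rw [mul_apply_eq_comp, mul_apply_eq_comp, ← mul_apply_eq_comp f, hfg,
      Submodule.starProjection_eq_self_iff]
    exact hgU x
  · rw [hfg]
    exact isSelfAdjoint_starProjection U

end InnerProductSpace

namespace Matrix
variable {𝕜 m : Type*} [RCLike 𝕜] [Fintype m] [DecidableEq m]

theorem rank_eq_finrank_range_toEuclideanCLM (A : Matrix m m 𝕜) :
    A.rank = Module.finrank 𝕜 (LinearMap.range (toEuclideanCLM (n := m) (𝕜 := 𝕜) A).toLinearMap) :=
  A.rank_eq_finrank_range_toLin (EuclideanSpace.basisFun m 𝕜).toBasis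
    (EuclideanSpace.basisFun m 𝕜).toBasis

theorem range_toEuclideanCLM_pow_succ_eq_of_rank_eq (A : Matrix m m 𝕜) {k : ℕ}
    (h : (A ^ k).rank = (A ^ (k + 1)).rank) :
    LinearMap.range (toEuclideanCLM (n := m) (𝕜 := 𝕜) A ^ (k + 1)).toLinearMap =
      LinearMap.range (toEuclideanCLM (n := m) (𝕜 := 𝕜) A ^ k).toLinearMap := by
  simp only [← map_pow]
  refine Submodule.eq_of_le_of_finrank_eq ?_ ?_
  · rw [pow_succ, map_mul]
    exact LinearMap.range_comp_le_range _ _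
  · rw [← rank_eq_finrank_range_toEuclideanCLM, ← rank_eq_finrank_range_toEuclideanCLM, h]

theorem rank_pow_succ_le (A : Matrix m m 𝕜) (j : ℕ) : (A ^ (j + 1)).rank ≤ (A ^ j).rank := by
  rw [pow_succ]
  exact rank_mul_le_left _ _

end Matrix

theorem rank_pow_matIndex_eq_rank_pow_succ {n : ℕ} (A : Matrix (Fin n) (Fin n) ℂ) :
    (A ^ matIndex A).rank = (A ^ (matIndex A + 1)).rank := by
  have : {j | (A ^ j).rank = (A ^ (j + 1)).rank}.Nonempty := by
    obtain ⟨j, hj⟩ := WellFounded.not_rel_apply_succ (r := (· < ·)) fun j => (A ^ j).rank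
    exact ⟨j, le_antisymm (not_lt.1 hj) (A.rank_pow_succ_le j)⟩
  exact Nat.sInf_mem this

theorem stmt0 {n : ℕ} (A : Matrix (Fin n) (Fin n) ℂ) (k : ℕ)
    (hk : k = matIndex A) :
    ∃! X : Matrix (Fin n) (Fin n) ℂ,
      X * A ^ (k + 1) = A ^ k ∧ A * X * X = X ∧ (A * X)ᴴ = A * X := by
  subst hk
  set Φ := toEuclideanCLM (n := Fin n) (𝕜 := ℂ)
  obtain ⟨g, hg⟩ := (Φ A).exists_isCoreEPAt
    (A.range_toEuclideanCLM_pow_succ_eq_of_rank_eq (rank_pow_matIndex_eq_rank_pow_succ A))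
  obtain ⟨X, rfl⟩ := Φ.surjective g
  have hX : IsCoreEPAt _ A X := IsCoreEPAt.of_map (φ := Φ.toStarRingEquiv) Φ.injective hg
  exact ⟨X, hX, fun Y hY => IsCoreEPAt.unique hY hX⟩
end

section
/- Let A be an m×n complex matrix, W an n×m complex matrix, and k = max(ind(AW), ind(WA)). If both X and Y satisfy the three equations Z*W*(AW)^(k+1) = (AW)^k, A*W*Z*W*Z = Z, (W*A*W*Z)^* = W*A*W*Z (with Z = X and Z = Y respectively), then X = Y. -/
open Matrix

lemma shift_pow {a b : ℕ} (p : Matrix (Fin a) (Fin b) ℂ) (q : Matrix (Fin b) (Fin a) ℂ)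
    (j : ℕ) : (p * q) ^ j * p = p * (q * p) ^ j := by
  induction j with
  | zero => simp
  | succ j ih =>
    calc (p*q)^(j+1) * p = ((p*q)^j * p) * (q*p) := by
          simp only [pow_succ, Matrix.mul_assoc]
      _ = (p * (q*p)^j) * (q*p) := by rw [ih]
      _ = p * (q*p)^(j+1) := by simp only [pow_succ, Matrix.mul_assoc]

theorem stmt2 {m n : ℕ} (A : Matrix (Fin m) (Fin n) ℂ) (W : Matrix (Fin n) (Fin m) ℂ)
    (k : ℕ) (hk : k = max (matIndex (A * W)) (matIndex (W * A)))
    (X Y : Matrix (Fin m) (Fin n) ℂ)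
    (hX1 : X * W * (A * W) ^ (k + 1) = (A * W) ^ k)
    (hX2 : A * W * X * W * X = X)
    (hX3 : (W * A * W * X)ᴴ = W * A * W * X)
    (hY1 : Y * W * (A * W) ^ (k + 1) = (A * W) ^ k)
    (hY2 : A * W * Y * W * Y = Y)
    (hY3 : (W * A * W * Y)ᴴ = W * A * W * Y) :
    X = Y := by
  -- basic facts in terms of Q := W*X, R := W*Y, N := W*A
  have hQ2 : (W*A) * (W*X) * (W*X) = W*X := by
    simpa only [Matrix.mul_assoc] using congrArg (fun Z => W * Z) hX2
  have hR2 : (W*A) * (W*Y) * (W*Y) = W*Y := by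
    simpa only [Matrix.mul_assoc] using congrArg (fun Z => W * Z) hY2
  have hQ3 : ((W*A) * (W*X))ᴴ = (W*A) * (W*X) := by
    simpa only [Matrix.mul_assoc] using hX3
  have hR3 : ((W*A) * (W*Y))ᴴ = (W*A) * (W*Y) := by
    simpa only [Matrix.mul_assoc] using hY3
  have hQ1 : (W*X) * (W*A)^(k+1) * W = (W*A)^k * W := by
    rw [Matrix.mul_assoc, shift_pow W A (k+1), shift_pow W A k]
    simpa only [Matrix.mul_assoc] using congrArg (fun Z => W * Z) hX1
  have hR1 : (W*Y) * (W*A)^(k+1) * W = (W*A)^k * W := by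
    rw [Matrix.mul_assoc, shift_pow W A (k+1), shift_pow W A k]
    simpa only [Matrix.mul_assoc] using congrArg (fun Z => W * Z) hY1
  -- power expansions
  have Qpow : ∀ j : ℕ, (W*X)^(j+1) = W * ((X*W)^j * X) := by
    intro j
    rw [pow_succ, ← Matrix.mul_assoc, shift_pow W X j, Matrix.mul_assoc]
  have Rpow : ∀ j : ℕ, (W*Y)^(j+1) = W * ((Y*W)^j * Y) := by
    intro j
    rw [pow_succ, ← Matrix.mul_assoc, shift_pow W Y j, Matrix.mul_assoc]
  have Qrep : ∀ j : ℕ, (W*A)^j * (W*X)^(j+1) = W*X := by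
    intro j
    induction j with
    | zero => simp
    | succ j ih =>
      calc (W*A)^(j+1) * (W*X)^(j+1+1)
          = (W*A)^j * ((W*A)*(W*X)*(W*X)) * (W*X)^j := by
            rw [pow_succ (W*A) j, pow_succ' (W*X) (j+1), pow_succ' (W*X) j]
            simp only [Matrix.mul_assoc]
        _ = (W*A)^j * (W*X)^(j+1) := by
            rw [hQ2, pow_succ' (W*X) j]
            simp only [Matrix.mul_assoc]
        _ = W*X := ih
  have Rrep : ∀ j : ℕ, (W*A)^j * (W*Y)^(j+1) = W*Y := by
    intro j
    induction j with
    | zero => simp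
    | succ j ih =>
      calc (W*A)^(j+1) * (W*Y)^(j+1+1)
          = (W*A)^j * ((W*A)*(W*Y)*(W*Y)) * (W*Y)^j := by
            rw [pow_succ (W*A) j, pow_succ' (W*Y) (j+1), pow_succ' (W*Y) j]
            simp only [Matrix.mul_assoc]
        _ = (W*A)^j * (W*Y)^(j+1) := by
            rw [hR2, pow_succ' (W*Y) j]
            simp only [Matrix.mul_assoc]
        _ = W*Y := ih
  -- representations of E := (W*A)*(W*X) and F := (W*A)*(W*Y)
  have Erep : (W*A)*(W*X) = (W*A)^(k+1) * (W * ((X*W)^k * X)) := by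
    calc (W*A)*(W*X) = (W*A) * ((W*A)^k * (W*X)^(k+1)) := by rw [Qrep k]
      _ = (W*A)^(k+1) * (W*X)^(k+1) := by
          rw [pow_succ' (W*A) k]; simp only [Matrix.mul_assoc]
      _ = (W*A)^(k+1) * (W * ((X*W)^k * X)) := by rw [Qpow k]
  have Frep : (W*A)*(W*Y) = (W*A)^(k+1) * (W * ((Y*W)^k * Y)) := by
    calc (W*A)*(W*Y) = (W*A) * ((W*A)^k * (W*Y)^(k+1)) := by rw [Rrep k]
      _ = (W*A)^(k+1) * (W*Y)^(k+1) := by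
          rw [pow_succ' (W*A) k]; simp only [Matrix.mul_assoc]
      _ = (W*A)^(k+1) * (W * ((Y*W)^k * Y)) := by rw [Rpow k]
  -- E and F fix the range of (W*A)^(k+1) * W
  have keyE : ((W*A)*(W*X)) * ((W*A)^(k+1) * W) = (W*A)^(k+1) * W := by
    calc ((W*A)*(W*X)) * ((W*A)^(k+1) * W)
        = (W*A) * ((W*X) * (W*A)^(k+1) * W) := by simp only [Matrix.mul_assoc]
      _ = (W*A) * ((W*A)^k * W) := by rw [hQ1]
      _ = (W*A)^(k+1) * W := by
          rw [pow_succ' (W*A) k]; simp only [Matrix.mul_assoc]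
  have keyF : ((W*A)*(W*Y)) * ((W*A)^(k+1) * W) = (W*A)^(k+1) * W := by
    calc ((W*A)*(W*Y)) * ((W*A)^(k+1) * W)
        = (W*A) * ((W*Y) * (W*A)^(k+1) * W) := by simp only [Matrix.mul_assoc]
      _ = (W*A) * ((W*A)^k * W) := by rw [hR1]
      _ = (W*A)^(k+1) * W := by
          rw [pow_succ' (W*A) k]; simp only [Matrix.mul_assoc]
  have fixE : ∀ (Z : Matrix (Fin m) (Fin n) ℂ),
      ((W*A)*(W*X)) * ((W*A)^(k+1) * (W * Z)) = (W*A)^(k+1) * (W * Z) := by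
    intro Z
    simpa only [Matrix.mul_assoc] using congrArg (fun T => T * Z) keyE
  have fixF : ∀ (Z : Matrix (Fin m) (Fin n) ℂ),
      ((W*A)*(W*Y)) * ((W*A)^(k+1) * (W * Z)) = (W*A)^(k+1) * (W * Z) := by
    intro Z
    simpa only [Matrix.mul_assoc] using congrArg (fun T => T * Z) keyF
  -- E*F = F, F*E = E, F*F = F
  have EF : ((W*A)*(W*X)) * ((W*A)*(W*Y)) = (W*A)*(W*Y) := by
    nth_rewrite 1 [Frep]
    rw [fixE ((Y*W)^k * Y), ← Frep]
  have FE : ((W*A)*(W*Y)) * ((W*A)*(W*X)) = (W*A)*(W*X) := by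
    nth_rewrite 1 [Erep]
    rw [fixF ((X*W)^k * X), ← Erep]
  have FF : ((W*A)*(W*Y)) * ((W*A)*(W*Y)) = (W*A)*(W*Y) := by
    nth_rewrite 2 [Frep]
    rw [fixF ((Y*W)^k * Y), ← Frep]
  -- E = F via hermitianness
  have EeqF : (W*A)*(W*X) = (W*A)*(W*Y) := by
    calc (W*A)*(W*X) = ((W*A)*(W*X))ᴴ := hQ3.symm
      _ = (((W*A)*(W*Y)) * ((W*A)*(W*X)))ᴴ := by rw [FE]
      _ = ((W*A)*(W*X))ᴴ * ((W*A)*(W*Y))ᴴ := conjTranspose_mul _ _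
      _ = ((W*A)*(W*X)) * ((W*A)*(W*Y)) := by rw [hQ3, hR3]
      _ = (W*A)*(W*Y) := EF
  -- R * E = Q and Q * F = R
  have REQ : (W*Y) * ((W*A)*(W*X)) = W*X := by
    rw [Erep]
    calc (W*Y) * ((W*A)^(k+1) * (W * ((X*W)^k * X)))
        = ((W*Y) * (W*A)^(k+1) * W) * ((X*W)^k * X) := by simp only [Matrix.mul_assoc]
      _ = ((W*A)^k * W) * ((X*W)^k * X) := by rw [hR1]
      _ = (W*A)^k * (W*X)^(k+1) := by rw [Qpow k]; simp only [Matrix.mul_assoc]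
      _ = W*X := Qrep k
  have QFR : (W*X) * ((W*A)*(W*Y)) = W*Y := by
    rw [Frep]
    calc (W*X) * ((W*A)^(k+1) * (W * ((Y*W)^k * Y)))
        = ((W*X) * (W*A)^(k+1) * W) * ((Y*W)^k * Y) := by simp only [Matrix.mul_assoc]
      _ = ((W*A)^k * W) * ((Y*W)^k * Y) := by rw [hQ1]
      _ = (W*A)^k * (W*Y)^(k+1) := by rw [Rpow k]; simp only [Matrix.mul_assoc]
      _ = W*Y := Rrep k
  -- Q = R
  have QR : W*X = W*Y := by
    calc W*X = (W*Y) * ((W*A)*(W*X)) := REQ.symm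
      _ = (W*Y) * ((W*A)*(W*Y)) := by rw [EeqF]
      _ = ((W*X) * ((W*A)*(W*Y))) * ((W*A)*(W*Y)) := by rw [QFR]
      _ = (W*X) * (((W*A)*(W*Y)) * ((W*A)*(W*Y))) := by rw [Matrix.mul_assoc]
      _ = (W*X) * ((W*A)*(W*Y)) := by rw [FF]
      _ = W*Y := QFR
  -- conclude
  calc X = A*W*X*W*X := hX2.symm
    _ = A * ((W*X) * (W*X)) := by simp only [Matrix.mul_assoc]
    _ = A * ((W*Y) * (W*Y)) := by rw [QR]
    _ = A*W*Y*W*Y := by simp only [Matrix.mul_assoc]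
    _ = Y := hY2
end

section
/- Let A be a square complex matrix with ind(A) = k, and let l ≥ k. Then the core-EP inverse of A satisfies A^⊕ = A^D * A^l * (A^l)^†, where A^D is the Drazin inverse and (A^l)^† is the Moore-Penrose inverse of A^l. In particular, A * A^⊕ = A^l * (A^l)^†. -/
open Matrix

theorem stmt3 {n : ℕ} (A X D P : Matrix (Fin n) (Fin n) ℂ) (k l : ℕ)
    (hk : k = matIndex A) (hl : k ≤ l)
    (hX : IsCoreEP A X) (hD : IsDrazin A D) (hP : IsMP (A ^ l) P) :
    X = D * A ^ l * P ∧ A * X = A ^ l * P := by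
  obtain ⟨h1, h2, h3⟩ := hX
  obtain ⟨hc, hdd, hd3⟩ := hD
  rw [← hk] at h1 hd3
  obtain ⟨hp1, hp2, hp3, hp4⟩ := hP
  have hcAD : Commute A D := hc
  -- D commutes with powers of A
  have hcomm : ∀ m : ℕ, D * A ^ m = A ^ m * D := fun m => ((hcAD.pow_left m).eq).symm
  have hcomm' : ∀ m : ℕ, D ^ m * A = A * D ^ m := fun m => ((hcAD.pow_right m).eq).symm
  -- D * A^(k+1) = A^k
  have hDAk : D * A ^ (k + 1) = A ^ k := by
    rw [hcomm (k + 1)]; exact hd3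
  -- X = A^m * X^(m+1)
  have hXpow : ∀ m : ℕ, X = A ^ m * X ^ (m + 1) := by
    intro m
    induction m with
    | zero => simp
    | succ m ih =>
      have hx2 : X ^ (m + 1) = A * X ^ (m + 2) := by
        calc X ^ (m + 1) = X * X ^ m := by rw [pow_succ']
          _ = (A * X * X) * X ^ m := by rw [h2]
          _ = A * X ^ (m + 2) := by
              rw [mul_assoc, mul_assoc, ← pow_succ', ← pow_succ']
      calc X = A ^ m * X ^ (m + 1) := ih
        _ = A ^ m * (A * X ^ (m + 2)) := by rw [← hx2]
        _ = A ^ (m + 1) * X ^ (m + 2) := by rw [← mul_assoc, ← pow_succ]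
  -- X = D * (A * X)
  have hXDAX : X = D * (A * X) := by
    conv_rhs => rw [hXpow k]
    rw [← mul_assoc A, ← pow_succ', ← mul_assoc, hDAk, ← hXpow k]
  -- A * X = A^m * D^m * (A * X)
  have hQl : ∀ m : ℕ, A * X = A ^ m * D ^ m * (A * X) := by
    intro m
    induction m with
    | zero => simp
    | succ m ih =>
      have key : A ^ (m + 1) * D ^ (m + 1) * (A * X)
          = A ^ m * D ^ m * (A * (D * (A * X))) := by
        rw [pow_succ A, pow_succ D]
        simp only [mul_assoc]
        rw [← mul_assoc A (D ^ m), ← hcomm' m, mul_assoc]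
      calc A * X = A ^ m * D ^ m * (A * X) := ih
        _ = A ^ m * D ^ m * (A * (D * (A * X))) := by rw [← hXDAX]
        _ = A ^ (m + 1) * D ^ (m + 1) * (A * X) := key.symm
  -- A * X * A^k = A^k
  have hAXAk : A * X * A ^ k = A ^ k := by
    conv_lhs => rw [← h1]
    rw [← mul_assoc, h2, h1]
  -- A * X * A^l = A^l
  obtain ⟨d, rfl⟩ := Nat.exists_eq_add_of_le hl
  have hAXAl : A * X * A ^ (k + d) = A ^ (k + d) := by
    rw [pow_add, ← mul_assoc, hAXAk]
  -- QR = R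
  have hQR : (A * X) * (A ^ (k + d) * P) = A ^ (k + d) * P := by
    rw [← mul_assoc, hAXAl]
  -- RQ = Q
  have hRQ : (A ^ (k + d) * P) * (A * X) = A * X := by
    calc (A ^ (k + d) * P) * (A * X)
        = (A ^ (k + d) * P) * (A ^ (k + d) * D ^ (k + d) * (A * X)) := by rw [← hQl (k + d)]
      _ = (A ^ (k + d) * P * A ^ (k + d)) * (D ^ (k + d) * (A * X)) := by
          rw [mul_assoc, mul_assoc, mul_assoc, mul_assoc]
      _ = A ^ (k + d) * (D ^ (k + d) * (A * X)) := by rw [hp1]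
      _ = A * X := by rw [← mul_assoc, ← hQl (k + d)]
  -- main: A * X = A^l * P
  have hmain : A * X = A ^ (k + d) * P := by
    calc A * X = (A * X)ᴴ := h3.symm
      _ = ((A ^ (k + d) * P) * (A * X))ᴴ := by rw [hRQ]
      _ = (A * X)ᴴ * (A ^ (k + d) * P)ᴴ := by rw [conjTranspose_mul]
      _ = (A * X) * (A ^ (k + d) * P) := by rw [h3, hp3]
      _ = A ^ (k + d) * P := hQR
  refine ⟨?_, hmain⟩
  rw [hXDAX, hmain, mul_assoc]
end

section
/- Let A be a square complex matrix with ind(A) = k, and let l ≥ k be a positive integer. Then A^⊕ = A^l * (A^{l+1})^†, where A^⊕ is the core-EP inverse of A and † denotes the Moore-Penrose inverse. -/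
open Matrix

theorem stmt4 {n : ℕ} (A X P : Matrix (Fin n) (Fin n) ℂ) (k l : ℕ)
    (hk : k = matIndex A) (hl : k ≤ l) (hlpos : 0 < l)
    (hX : IsCoreEP A X) (hP : IsMP (A ^ (l + 1)) P) :
    X = A ^ l * P := by
  obtain ⟨h1, h2, h3⟩ := hX
  obtain ⟨p1, p2, p3, p4⟩ := hP
  rw [← hk] at h1
  -- X = A^m * X^(m+1) for all m
  have hXpow : ∀ m : ℕ, X = A ^ m * X ^ (m + 1) := by
    intro m
    induction m with
    | zero => simp
    | succ m ih =>
      calc X = A ^ m * X ^ (m + 1) := ih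
        _ = A ^ m * (X * X ^ m) := by rw [pow_succ']
        _ = A ^ m * ((A * X * X) * X ^ m) := by rw [h2]
        _ = A ^ (m + 1) * X ^ (m + 1 + 1) := by
            rw [pow_succ A, pow_succ' X (m + 1), pow_succ' X m]
            simp only [mul_assoc]
  -- X * A^(l+1) = A^l
  have hXA : X * A ^ (l + 1) = A ^ l := by
    have hls : l + 1 = (k + 1) + (l - k) := by omega
    rw [hls, pow_add, ← mul_assoc, h1, ← pow_add]
    congr 1
    omega
  -- A * X = A^(l+1) * X^(l+1)
  have hAX : A * X = A ^ (l + 1) * X ^ (l + 1) := by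
    conv_lhs => rw [hXpow l]
    rw [← mul_assoc, ← pow_succ']
  -- A * X * A^(l+1) = A^(l+1)
  have hAXA : A * X * A ^ (l + 1) = A ^ (l + 1) := by
    rw [mul_assoc, hXA, ← pow_succ']
  have hQAX : (A ^ (l + 1) * P) * (A * X) = A * X := by
    rw [hAX, ← mul_assoc, p1, ← hAX]
  have hAXQ : A * X * (A ^ (l + 1) * P) = A ^ (l + 1) * P := by
    rw [← mul_assoc, hAXA]
  have hAXQ2 : A * X * (A ^ (l + 1) * P) = A * X := by
    conv_lhs => rw [← h3, ← p3, ← conjTranspose_mul]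
    rw [hQAX, h3]
  have hQeq : A * X = A ^ (l + 1) * P := hAXQ2.symm.trans hAXQ
  -- X * A * X = X
  have hXAX : X * A * X = X := by
    calc X * A * X = X * A * (A ^ l * X ^ (l + 1)) := by rw [← hXpow l]
      _ = X * A ^ (l + 1) * X ^ (l + 1) := by
          rw [mul_assoc, ← mul_assoc A, ← pow_succ', ← mul_assoc]
      _ = A ^ l * X ^ (l + 1) := by rw [hXA]
      _ = X := (hXpow l).symm
  calc X = X * A * X := hXAX.symm
    _ = X * (A * X) := mul_assoc _ _ _
    _ = X * (A ^ (l + 1) * P) := by rw [hQeq]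
    _ = X * A ^ (l + 1) * P := (mul_assoc _ _ _).symm
    _ = A ^ l * P := by rw [hXA]
end

section
/- Let A ∈ ℂ^{m×n}, W ∈ ℂ^{n×m}, and let l ≥ k = max(ind(AW), ind(WA)). Then the W-weighted core-EP inverse of A satisfies A^{⊕,W} = (AW)^l * (W*(AW)^{l+1})^†, where † denotes the Moore-Penrose inverse. -/
open Matrix

/-! ### Auxiliary lemmas -/

private lemma shiftPow {m n : ℕ} (A : Matrix (Fin m) (Fin n) ℂ) (W : Matrix (Fin n) (Fin m) ℂ) :
    ∀ j : ℕ, W * (A * W) ^ j = (W * A) ^ j * W := by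
  intro j
  induction j with
  | zero => simp
  | succ j ih =>
    calc W * (A * W) ^ (j + 1) = W * ((A * W) * (A * W) ^ j) := by rw [pow_succ']
    _ = (W * A) * (W * (A * W) ^ j) := by
        rw [← Matrix.mul_assoc, ← Matrix.mul_assoc, Matrix.mul_assoc (W * A) W _]
    _ = (W * A) * ((W * A) ^ j * W) := by rw [ih]
    _ = (W * A) ^ (j + 1) * W := by rw [← Matrix.mul_assoc, ← pow_succ']

section RingLemmas

variable {R : Type*} [Ring R] {N Y : R}

private lemma lemF2 (h2 : N * Y * Y = Y) : ∀ j : ℕ, N ^ j * Y ^ (j + 1) = Y := by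
  intro j
  induction j with
  | zero => simp
  | succ j ih =>
    have e : N ^ (j + 1) * Y ^ (j + 2) = N ^ j * ((N * Y * Y) * Y ^ j) := by
      rw [pow_succ N j, pow_succ' Y (j + 1), pow_succ' Y j]
      noncomm_ring
    rw [e, h2, ← pow_succ', ih]

private lemma lemF3 (h2 : N * Y * Y = Y) : ∀ j : ℕ, N ^ (j + 1) * Y ^ (j + 1) = N * Y := by
  intro j
  rw [pow_succ' N j, mul_assoc, lemF2 h2 j]

private lemma lemG (h2 : N * Y * Y = Y) : ∀ d : ℕ, Y ^ (d + 1) = N * Y ^ (d + 2) := by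
  intro d
  have h2' : N * (Y * Y) = Y := by rw [← mul_assoc]; exact h2
  calc Y ^ (d + 1) = Y * Y ^ d := pow_succ' Y d
  _ = (N * (Y * Y)) * Y ^ d := by rw [h2']
  _ = N * (Y * (Y * Y ^ d)) := by rw [mul_assoc, mul_assoc]
  _ = N * Y ^ (d + 2) := by rw [← pow_succ', ← pow_succ']

private lemma lemC (h2 : N * Y * Y = Y) : ∀ d : ℕ, Y * N ^ (d + 1) * Y ^ (d + 1) = Y * N * Y := by
  intro d
  induction d with
  | zero => simp
  | succ d ih =>
    calc Y * N ^ (d + 2) * Y ^ (d + 2)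
        = Y * (N ^ (d + 1) * N) * Y ^ (d + 2) := by rw [← pow_succ]
    _ = Y * N ^ (d + 1) * (N * Y ^ (d + 2)) := by rw [← mul_assoc, mul_assoc _ _ N, ← mul_assoc,
          mul_assoc _ N _]
    _ = Y * N ^ (d + 1) * Y ^ (d + 1) := by rw [← lemG h2 d]
    _ = Y * N * Y := ih

end RingLemmas

private lemma indexSpec {s : ℕ} (B : Matrix (Fin s) (Fin s) ℂ) :
    (B ^ matIndex B).rank = (B ^ (matIndex B + 1)).rank := by
  have hmono : ∀ j : ℕ, (B ^ (j + 1)).rank ≤ (B ^ j).rank := by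
    intro j
    rw [pow_succ']
    exact Matrix.rank_mul_le_right _ _
  have hne : {j | (B ^ j).rank = (B ^ (j + 1)).rank}.Nonempty := by
    by_contra h
    rw [Set.not_nonempty_iff_eq_empty] at h
    have hstrict : ∀ j : ℕ, (B ^ (j + 1)).rank < (B ^ j).rank := by
      intro j
      have hne' : (B ^ j).rank ≠ (B ^ (j + 1)).rank := by
        intro heq
        have : j ∈ {j | (B ^ j).rank = (B ^ (j + 1)).rank} := heq
        rw [h] at this
        exact this
      exact lt_of_le_of_ne (hmono j) (fun e => hne' e.symm)
    have hbound : ∀ j : ℕ, (B ^ j).rank + j ≤ (B ^ 0).rank := by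
      intro j
      induction j with
      | zero => simp
      | succ j ih =>
        have := hstrict j
        omega
    have := hbound ((B ^ 0).rank + 1)
    omega
  have := Nat.sInf_mem hne
  exact this

private lemma kerStep {s : ℕ} {B : Matrix (Fin s) (Fin s) ℂ} {k : ℕ}
    (h : (B ^ k).rank = (B ^ (k + 1)).rank) {v : Fin s → ℂ}
    (hv : B ^ (k + 1) *ᵥ v = 0) : B ^ k *ᵥ v = 0 := by
  have hle : LinearMap.ker (B ^ k).mulVecLin ≤ LinearMap.ker (B ^ (k + 1)).mulVecLin := by
    intro x hx
    rw [LinearMap.mem_ker, Matrix.mulVecLin_apply] at hx ⊢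
    rw [pow_succ', ← Matrix.mulVec_mulVec, hx, Matrix.mulVec_zero]
  have hr1 := LinearMap.finrank_range_add_finrank_ker (B ^ k).mulVecLin
  have hr2 := LinearMap.finrank_range_add_finrank_ker (B ^ (k + 1)).mulVecLin
  simp only [Matrix.rank] at h
  have hfin : Module.finrank ℂ (LinearMap.ker (B ^ (k + 1)).mulVecLin) ≤
      Module.finrank ℂ (LinearMap.ker (B ^ k).mulVecLin) := by omega
  have heq := Submodule.eq_of_le_of_finrank_le hle hfin
  have hvmem : v ∈ LinearMap.ker (B ^ (k + 1)).mulVecLin := by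
    rw [LinearMap.mem_ker, Matrix.mulVecLin_apply]; exact hv
  rw [← heq, LinearMap.mem_ker, Matrix.mulVecLin_apply] at hvmem
  exact hvmem

private lemma kerDescend {s : ℕ} {B : Matrix (Fin s) (Fin s) ℂ} {j : ℕ}
    (hj : matIndex B ≤ j) {v : Fin s → ℂ}
    (hv : B ^ (j + 1) *ᵥ v = 0) : B ^ j *ᵥ v = 0 := by
  obtain ⟨d, rfl⟩ : ∃ d, j = matIndex B + d := ⟨j - matIndex B, by omega⟩
  have e1 : B ^ (matIndex B + d + 1) = B ^ (matIndex B + 1) * B ^ d := by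
    rw [← pow_add]; ring_nf
  have e2 : B ^ (matIndex B + d) = B ^ matIndex B * B ^ d := by rw [← pow_add]
  rw [e1, ← Matrix.mulVec_mulVec] at hv
  have := kerStep (indexSpec B) hv
  rw [Matrix.mulVec_mulVec] at this
  rw [e2]
  exact this

theorem stmt5 {m n : ℕ} (A : Matrix (Fin m) (Fin n) ℂ) (W : Matrix (Fin n) (Fin m) ℂ)
    (Y : Matrix (Fin n) (Fin n) ℂ) (P : Matrix (Fin m) (Fin n) ℂ) (k l : ℕ)
    (hk : k = max (matIndex (A * W)) (matIndex (W * A))) (hl : k ≤ l)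
    (hY : IsCoreEP (W * A) Y) (hP : IsMP (W * (A * W) ^ (l + 1)) P) :
    A * (Y * Y) = (A * W) ^ l * P := by
  obtain ⟨hY1, hY2, hY3⟩ := hY
  obtain ⟨hP1, hP2, hP3, hP4⟩ := hP
  set N : Matrix (Fin n) (Fin n) ℂ := W * A with hN
  set κ : ℕ := matIndex N with hκ
  have hκl : κ ≤ l := le_trans (le_trans (le_max_right (matIndex (A * W)) κ) hk.ge) hl
  have hk2l : matIndex (A * W) ≤ l :=
    le_trans (le_trans (le_max_left (matIndex (A * W)) (matIndex N)) hk.ge) hl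
  -- F1 : Y * N^(l+1) = N^l
  have F1 : Y * N ^ (l + 1) = N ^ l := by
    obtain ⟨d, rfl⟩ : ∃ d, l = κ + d := ⟨l - κ, by omega⟩
    have e1 : κ + d + 1 = (κ + 1) + d := by omega
    rw [e1, pow_add, ← Matrix.mul_assoc, hY1, ← pow_add]
  have F2 := lemF2 hY2
  have F5 : Y * N * Y = Y := by
    have h := lemC hY2 l
    rw [F1, F2 l] at h
    exact h.symm
  set Z : Matrix (Fin m) (Fin n) ℂ := A * Y ^ (l + 2) with hZ
  set M : Matrix (Fin n) (Fin m) ℂ := W * (A * W) ^ (l + 1) with hM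
  have hMN : M = N ^ (l + 1) * W := shiftPow A W (l + 1)
  have MZ : M * Z = N * Y := by
    calc M * Z = N ^ (l + 1) * W * (A * Y ^ (l + 2)) := by rw [hMN, hZ]
    _ = N ^ (l + 1) * (W * A) * Y ^ (l + 2) := by
        rw [Matrix.mul_assoc (N ^ (l + 1)) W _, ← Matrix.mul_assoc W A _, ← Matrix.mul_assoc]
    _ = N ^ (l + 2) * Y ^ (l + 2) := by rw [← hN, ← pow_succ]
    _ = N * Y := lemF3 hY2 (l + 1)
  have MZM : M * Z * M = M := by
    calc M * Z * M = (N * Y) * (N ^ (l + 1) * W) := by rw [MZ, hMN]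
    _ = N * (Y * N ^ (l + 1)) * W := by
        rw [← Matrix.mul_assoc, Matrix.mul_assoc N Y _]
    _ = N ^ (l + 1) * W := by rw [F1, ← pow_succ']
    _ = M := hMN.symm
  have hMZH : (M * Z)ᴴ = M * Z := by rw [MZ]; exact hY3
  have MP_eq : M * P = M * Z := by
    calc M * P = (M * Z * M) * P := by rw [MZM]
    _ = (M * Z) * (M * P) := by rw [Matrix.mul_assoc]
    _ = (M * Z)ᴴ * (M * P)ᴴ := by rw [hMZH, hP3]
    _ = ((M * P) * (M * Z))ᴴ := (conjTranspose_mul _ _).symm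
    _ = ((M * P * M) * Z)ᴴ := by rw [Matrix.mul_assoc (M * P) M Z]
    _ = (M * Z)ᴴ := by rw [hP1]
    _ = M * Z := hMZH
  have key : (A * W) ^ (l + 2) * Z = (A * W) ^ (l + 2) * P := by
    have hAM : (A * W) ^ (l + 2) = A * M := by
      rw [hM, pow_succ' (A * W) (l + 1), Matrix.mul_assoc]
    rw [hAM, Matrix.mul_assoc A M Z, Matrix.mul_assoc A M P, MP_eq]
  have hZP : (A * W) ^ l * Z = (A * W) ^ l * P := by
    have h0 : ∀ v, ((A * W) ^ l * (Z - P)) *ᵥ v = 0 := by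
      intro v
      have h2 : (A * W) ^ (l + 2) *ᵥ ((Z - P) *ᵥ v) = 0 := by
        rw [Matrix.mulVec_mulVec, Matrix.mul_sub, key, sub_self, Matrix.zero_mulVec]
      have h1 : (A * W) ^ (l + 1) *ᵥ ((Z - P) *ᵥ v) = 0 :=
        kerDescend (by omega : matIndex (A * W) ≤ l + 1) h2
      have hl0 : (A * W) ^ l *ᵥ ((Z - P) *ᵥ v) = 0 := kerDescend hk2l h1
      rw [← Matrix.mulVec_mulVec]
      exact hl0
    have hzero : (A * W) ^ l * (Z - P) = 0 := by
      apply Matrix.toLin'.injective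
      apply LinearMap.ext
      intro v
      rw [Matrix.toLin'_apply, Matrix.toLin'_apply, h0 v, Matrix.zero_mulVec]
    have h3 : (A * W) ^ l * Z - (A * W) ^ l * P = 0 := by rwa [Matrix.mul_sub] at hzero
    exact sub_eq_zero.mp h3
  have hfin : (A * W) ^ l * Z = A * (Y * Y) := by
    have hA : A * (W * A) ^ l = (A * W) ^ l * A := shiftPow W A l
    rw [← hN] at hA
    have e1 : N ^ l * Y ^ (l + 2) = Y * Y := by
      rw [pow_succ Y (l + 1), ← Matrix.mul_assoc, F2 l]
    calc (A * W) ^ l * Z = (A * W) ^ l * (A * Y ^ (l + 2)) := by rw [hZ]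
    _ = ((A * W) ^ l * A) * Y ^ (l + 2) := by rw [Matrix.mul_assoc]
    _ = (A * N ^ l) * Y ^ (l + 2) := by rw [hA]
    _ = A * (N ^ l * Y ^ (l + 2)) := by rw [Matrix.mul_assoc]
    _ = A * (Y * Y) := by rw [e1]
  rw [← hfin, hZP]
end

section
/- Let A ∈ ℂ^{m×n}, W ∈ ℂ^{n×m}, and let l ≥ k = max(ind(AW), ind(WA)). Then A^{⊕,W} = A * (WA)^l * ((WA)^{l+2})^†, where † denotes the Moore-Penrose inverse. -/
open Matrix

theorem stmt6 {m n : ℕ} (A : Matrix (Fin m) (Fin n) ℂ) (W : Matrix (Fin n) (Fin m) ℂ)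
    (Y P : Matrix (Fin n) (Fin n) ℂ) (k l : ℕ)
    (hk : k = max (matIndex (A * W)) (matIndex (W * A))) (hl : k ≤ l)
    (hY : IsCoreEP (W * A) Y) (hP : IsMP ((W * A) ^ (l + 2)) P) :
    A * (Y * Y) = A * (W * A) ^ l * P := by
  obtain ⟨hY1, hY2, hY3⟩ := hY
  obtain ⟨hP1, hP2, hP3, hP4⟩ := hP
  set M := W * A with hMdef
  set k0 := matIndex M with hk0def
  -- M^j * Y^(j+1) = Y for all j
  have hA : ∀ j : ℕ, M ^ j * Y ^ (j + 1) = Y := by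
    intro j
    induction j with
    | zero => simp
    | succ j ih =>
      have : M ^ (j + 1) * Y ^ (j + 2) = M ^ j * ((M * Y * Y) * Y ^ j) := by
        rw [pow_succ M, pow_succ' Y (j+1), pow_succ' Y j]
        noncomm_ring
      rw [this, hY2, ← pow_succ' Y j, ih]
  -- M*Y = M^(j+1) * Y^(j+1)
  have hMYpow : ∀ j : ℕ, M ^ (j + 1) * Y ^ (j + 1) = M * Y := by
    intro j
    rw [pow_succ' M j, mul_assoc, hA j]
  -- Y * M^(k0 + j + 1) = M^(k0 + j)
  have hB : ∀ j : ℕ, Y * M ^ (k0 + j + 1) = M ^ (k0 + j) := by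
    intro j
    have : Y * M ^ (k0 + j + 1) = (Y * M ^ (k0 + 1)) * M ^ j := by
      rw [mul_assoc, ← pow_add]
      congr 2
      omega
    rw [this, hY1, ← pow_add]
  have hk0l : k0 ≤ l := le_trans (le_trans (hk ▸ le_max_right _ _) hl) le_rfl
  have hBl : Y * M ^ (l + 1) = M ^ l := by
    obtain ⟨d, rfl⟩ := Nat.exists_eq_add_of_le hk0l
    exact hB d
  have hBl1 : Y * M ^ (l + 2) = M ^ (l + 1) := by
    obtain ⟨d, rfl⟩ := Nat.exists_eq_add_of_le hk0l
    exact hB (d + 1)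
  -- Y * M * Y = Y
  have hYMY : Y * M * Y = Y := by
    have h1 : Y * M * Y = Y * (M ^ (k0 + 1) * Y ^ (k0 + 1)) := by
      rw [hMYpow k0, ← mul_assoc]
    rw [h1, ← mul_assoc, hY1, hA k0]
  -- M*Y * M^(l+2) = M^(l+2)
  have h2 : M * Y * M ^ (l + 2) = M ^ (l + 2) := by
    rw [mul_assoc, hBl1, ← pow_succ' M (l + 1)]
  -- M^(l+2)*P * (M*Y) = M*Y
  have h3 : M ^ (l + 2) * P * (M * Y) = M * Y := by
    conv_lhs => rw [← hMYpow (l + 1)]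
    rw [show M ^ (l + 2) * P * (M ^ (l + 2) * Y ^ (l + 2))
        = (M ^ (l + 2) * P * M ^ (l + 2)) * Y ^ (l + 2) from by noncomm_ring,
      hP1, hMYpow (l + 1)]
  -- M*Y * (M^(l+2)*P) = M^(l+2)*P
  have h4 : M * Y * (M ^ (l + 2) * P) = M ^ (l + 2) * P := by
    rw [← mul_assoc, h2]
  -- M*Y = M^(l+2)*P
  have h5 : M * Y = M ^ (l + 2) * P := by
    have := congrArg conjTranspose h3
    rw [conjTranspose_mul, hY3, hP3] at this
    -- this : M * Y * (M ^ (l+2) * P) = M * Y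
    rw [← this, h4]
  -- Y*Y*M^(l+2) = M^l
  have h6 : Y * Y * M ^ (l + 2) = M ^ l := by
    rw [mul_assoc, hBl1, hBl]
  -- main identity
  have key : Y * Y = M ^ l * P := by
    calc Y * Y = Y * (Y * M * Y) := by rw [hYMY]
      _ = Y * Y * (M * Y) := by noncomm_ring
      _ = Y * Y * (M ^ (l + 2) * P) := by rw [h5]
      _ = (Y * Y * M ^ (l + 2)) * P := by noncomm_ring
      _ = M ^ l * P := by rw [h6]
  rw [key]
  exact (Matrix.mul_assoc A (M ^ l) P).symm
end

section
/- Let A ∈ ℂ^{m×n}, W ∈ ℂ^{n×m} with ind(WA) = k. Then X = A^{⊕,W} is a {2}-inverse of WAW, i.e., X * (W*A*W) * X = X. -/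
open Matrix

theorem stmt7 {m n : ℕ} (A : Matrix (Fin m) (Fin n) ℂ) (W : Matrix (Fin n) (Fin m) ℂ)
    (Y : Matrix (Fin n) (Fin n) ℂ) (k : ℕ)
    (hk : k = matIndex (W * A)) (hY : IsCoreEP (W * A) Y) :
    (A * (Y * Y)) * (W * A * W) * (A * (Y * Y)) = A * (Y * Y) := by
  obtain ⟨h1, h2, h3⟩ := hY
  set M := W * A with hM
  -- Lemma A : M^j * Y^(j+1) = Y
  have hA : ∀ j : ℕ, M ^ j * Y ^ (j + 1) = Y := by
    intro j
    induction j with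
    | zero => simp
    | succ j ih =>
      calc M ^ (j + 1) * Y ^ (j + 2)
          = M ^ j * (M * Y * Y) * Y ^ j := by
            rw [pow_succ M, show Y ^ (j + 2) = Y * (Y * Y ^ j) by
              rw [pow_succ' Y (j+1), pow_succ' Y j]]
            noncomm_ring
        _ = M ^ j * Y ^ (j + 1) := by rw [h2, pow_succ' Y j]; noncomm_ring
        _ = Y := ih
  -- Lemma B : Y * M^(j+1) * Y^(j+1) = Y * M * Y
  have hB : ∀ j : ℕ, Y * M ^ (j + 1) * Y ^ (j + 1) = Y * M * Y := by
    intro j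
    induction j with
    | zero => simp
    | succ j ih =>
      calc Y * M ^ (j + 2) * Y ^ (j + 2)
          = Y * M ^ (j + 1) * (M * Y * Y) * Y ^ j := by
            rw [pow_succ M (j+1), show Y ^ (j + 2) = Y * (Y * Y ^ j) by
              rw [pow_succ' Y (j+1), pow_succ' Y j]]
            noncomm_ring
        _ = Y * M ^ (j + 1) * Y ^ (j + 1) := by rw [h2, pow_succ' Y j]; noncomm_ring
        _ = Y * M * Y := ih
  -- outer inverse : Y * M * Y = Y
  have houter : Y * M * Y = Y := by
    have := hB (matIndex M)
    rw [show Y * M ^ (matIndex M + 1) * Y ^ (matIndex M + 1)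
        = (Y * M ^ (matIndex M + 1)) * Y ^ (matIndex M + 1) by noncomm_ring, h1,
      hA (matIndex M)] at this
    exact this.symm
  have hMY : M * (Y * Y) = Y := by rw [← Matrix.mul_assoc]; exact h2
  have houter' : Y * (M * Y) = Y := by rw [← Matrix.mul_assoc]; exact houter
  calc A * (Y * Y) * (M * W) * (A * (Y * Y))
      = A * (Y * (Y * (M * ((W * A) * (Y * Y))))) := by simp only [Matrix.mul_assoc]
    _ = A * (Y * (Y * (M * (M * (Y * Y))))) := by rw [← hM]
    _ = A * (Y * (Y * (M * Y))) := by rw [hMY]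
    _ = A * (Y * Y) := by rw [houter']
end

section
/- Let A ∈ ℂ^{m×n}, W ∈ ℂ^{n×m} with ind(WA) = k. Then the range of A^{⊕,W} equals the range of A*(WA)^k*((WA)^k)^†, and the null space of A^{⊕,W} equals the null space of A*(WA)^k*((WA)^k)^†. -/
open Matrix

theorem stmt8 {m n : ℕ} (A : Matrix (Fin m) (Fin n) ℂ) (W : Matrix (Fin n) (Fin m) ℂ)
    (Y P : Matrix (Fin n) (Fin n) ℂ) (k : ℕ)
    (hk : k = matIndex (W * A)) (hY : IsCoreEP (W * A) Y) (hP : IsMP ((W * A) ^ k) P) :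
    LinearMap.range (A * (Y * Y)).mulVecLin
      = LinearMap.range (A * (W * A) ^ k * P).mulVecLin ∧
    LinearMap.ker (A * (Y * Y)).mulVecLin
      = LinearMap.ker (A * (W * A) ^ k * P).mulVecLin := by
  set M : Matrix (Fin n) (Fin n) ℂ := W * A with hM
  obtain ⟨h1, h2, h3⟩ := hY
  rw [← hk] at h1
  obtain ⟨p1, p2, p3, p4⟩ := hP
  -- right-associated version of h2
  have h2' : M * (Y * Y) = Y := by rw [← mul_assoc]; exact h2
  -- M * Y^(i+2) = Y^(i+1)
  have hMY2 : ∀ i : ℕ, M * Y ^ (i + 2) = Y ^ (i + 1) := by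
    intro i
    have hy : Y ^ (i + 2) = Y * Y * Y ^ i := by
      rw [pow_succ', pow_succ', ← mul_assoc]
    rw [hy, ← mul_assoc, h2', ← pow_succ']
  -- M^(j+1) * Y^(j+1) = M * Y
  have hpow : ∀ j : ℕ, M ^ (j + 1) * Y ^ (j + 1) = M * Y := by
    intro j
    induction j with
    | zero => simp
    | succ j ih =>
      calc M ^ (j + 2) * Y ^ (j + 2)
          = M ^ (j + 1) * (M * Y ^ (j + 2)) := by rw [pow_succ M (j + 1), mul_assoc]
        _ = M ^ (j + 1) * Y ^ (j + 1) := by rw [hMY2 j]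
        _ = M * Y := ih
  -- Y = M^(k+1) * Y^(k+2)
  have hYrep : Y = M ^ (k + 1) * Y ^ (k + 2) := by
    conv_rhs => rw [pow_succ Y (k + 1), ← mul_assoc, hpow k]
    exact h2.symm
  -- M * Y * M^k = M^k
  have hEN : M * Y * M ^ k = M ^ k := by
    conv_lhs => rw [← h1]
    rw [← mul_assoc, h2, h1]
  -- Y * Y * M^(k+2) = M^k
  have hY2M : Y * Y * M ^ (k + 2) = M ^ k := by
    rw [pow_succ M (k + 1), ← mul_assoc, mul_assoc Y Y, h1, mul_assoc, ← pow_succ, h1]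
  -- Y * Y * M^(k+3) = M^(k+1)
  have hY2M3 : Y * Y * M ^ (k + 3) = M ^ (k + 1) := by
    rw [pow_succ M (k + 2), ← mul_assoc, hY2M, ← pow_succ]
  -- M^k * P * M^(k+1) = M^(k+1)
  have hQM1 : M ^ k * P * M ^ (k + 1) = M ^ (k + 1) := by
    rw [pow_succ M k, ← mul_assoc, p1]
  -- M^k * P * (M * Y) = M * Y
  have hQE : M ^ k * P * (M * Y) = M * Y := by
    rw [← hpow k, ← mul_assoc, hQM1]
  -- M * Y * (M^k * P) = M^k * P
  have hEQ : M * Y * (M ^ k * P) = M ^ k * P := by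
    rw [← mul_assoc, hEN]
  -- from hermitian: M^k * P * (M * Y) = M^k * P
  have hQEQ : M ^ k * P * (M * Y) = M ^ k * P := by
    have h0 := congrArg conjTranspose hEQ
    rw [conjTranspose_mul, h3, p3] at h0
    exact h0
  -- the key identity : M * Y = M^k * P
  have hMYQ : M * Y = M ^ k * P := by rw [← hQE, hQEQ]
  -- M^k * P * Y = Y
  have hQY : M ^ k * P * Y = Y := by
    conv_lhs => rw [hYrep]
    rw [← mul_assoc, hQM1, ← hYrep]
  constructor
  · -- range equality
    have r1 : A * M ^ k * P * (Y * Y) = A * (Y * Y) := by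
      rw [Matrix.mul_assoc A (M ^ k) P, Matrix.mul_assoc A (M ^ k * P) (Y * Y),
        ← mul_assoc (M ^ k * P) Y Y, hQY]
    have r2 : A * (Y * Y) * (M ^ (k + 2) * P) = A * M ^ k * P := by
      rw [Matrix.mul_assoc A (Y * Y), ← mul_assoc (Y * Y), hY2M, ← Matrix.mul_assoc]
    apply le_antisymm
    · rw [← r1, mulVecLin_mul]
      exact LinearMap.range_comp_le_range _ _
    · rw [← r2, mulVecLin_mul]
      exact LinearMap.range_comp_le_range _ _
  · -- kernel equality
    apply le_antisymm
    · intro v hv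
      rw [LinearMap.mem_ker, mulVecLin_apply] at hv ⊢
      have e1 : W * (A * (Y * Y)) = Y := by rw [← Matrix.mul_assoc, ← hM, h2']
      have hYv : Y *ᵥ v = 0 := by
        have h0 : W *ᵥ (A * (Y * Y)) *ᵥ v = 0 := by rw [hv, mulVec_zero]
        rwa [mulVec_mulVec, e1] at h0
      have e2 : A * M ^ k * P = A * M * Y := by
        rw [Matrix.mul_assoc, ← hMYQ, ← Matrix.mul_assoc]
      rw [e2, ← mulVec_mulVec, hYv, mulVec_zero]
    · intro v hv
      rw [LinearMap.mem_ker, mulVecLin_apply] at hv ⊢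
      have e3 : W * (A * M ^ k * P) = M * (M * Y) := by
        rw [← Matrix.mul_assoc, ← Matrix.mul_assoc, ← hM, mul_assoc M (M ^ k) P, ← hMYQ]
      have hMMY : (M * (M * Y)) *ᵥ v = 0 := by
        have h0 : W *ᵥ (A * M ^ k * P) *ᵥ v = 0 := by rw [hv, mulVec_zero]
        rwa [mulVec_mulVec, e3] at h0
      have e4 : M ^ (k + 3) * Y ^ (k + 2) = M * (M * Y) := by
        conv_rhs => rw [hYrep]
        simp only [pow_succ', mul_assoc]
      have h5 : (M ^ (k + 3) * Y ^ (k + 2)) *ᵥ v = 0 := by rw [e4, hMMY]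
      have hYv : Y *ᵥ v = 0 := by
        have h0 : (Y * Y) *ᵥ (M ^ (k + 3) * Y ^ (k + 2)) *ᵥ v = 0 := by
          rw [h5, mulVec_zero]
        rw [mulVec_mulVec, ← mul_assoc, hY2M3] at h0
        rw [hYrep]
        exact h0
      rw [show A * (Y * Y) = A * Y * Y from by rw [Matrix.mul_assoc], ← mulVec_mulVec, hYv,
        mulVec_zero]
end

section
/- Let A ∈ ℂ^{m×n}, W ∈ ℂ^{n×m} with k = max(ind(AW), ind(WA)). Then the range (column space) of A^{⊕,W} equals the range of (AW)^k. -/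
open Matrix

private lemma range_mul_le {l m n : ℕ} (P : Matrix (Fin l) (Fin m) ℂ)
    (Q : Matrix (Fin m) (Fin n) ℂ) :
    LinearMap.range (P * Q).mulVecLin ≤ LinearMap.range P.mulVecLin := by
  rw [Matrix.mulVecLin_mul]
  exact LinearMap.range_comp_le_range _ _

private lemma matIndex_spec {N : ℕ} (M : Matrix (Fin N) (Fin N) ℂ) :
    (M ^ (matIndex M)).rank = (M ^ (matIndex M + 1)).rank := by
  have hne : {j | (M ^ j).rank = (M ^ (j + 1)).rank}.Nonempty := by
    by_contra h
    simp only [Set.Nonempty, Set.mem_setOf_eq, not_exists] at h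
    have hlt : ∀ j, (M ^ (j + 1)).rank < (M ^ j).rank := by
      intro j
      have hle : (M ^ (j + 1)).rank ≤ (M ^ j).rank := by
        rw [pow_succ]; exact Matrix.rank_mul_le_left _ _
      exact lt_of_le_of_ne hle (fun e => h j e.symm)
    have key : ∀ j, (M ^ j).rank + j ≤ (M ^ 0).rank := by
      intro j
      induction j with
      | zero => simp
      | succ j ih => have := hlt j; omega
    have := key ((M ^ 0).rank + 1)
    omega
  exact Nat.sInf_mem hne

private lemma range_pow_succ {N : ℕ} (M : Matrix (Fin N) (Fin N) ℂ) {k : ℕ}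
    (hk : matIndex M ≤ k) :
    LinearMap.range ((M ^ (k + 1)).mulVecLin) = LinearMap.range ((M ^ k).mulVecLin) := by
  induction k, hk using Nat.le_induction with
  | base =>
    have hle : LinearMap.range ((M ^ (matIndex M + 1)).mulVecLin)
        ≤ LinearMap.range ((M ^ (matIndex M)).mulVecLin) := by
      rw [pow_succ]; exact range_mul_le _ _
    refine Submodule.eq_of_le_of_finrank_eq hle ?_
    exact (matIndex_spec M).symm
  | succ j hj ih =>
    have e1 : M ^ (j + 1 + 1) = M * M ^ (j + 1) := (pow_succ' M (j + 1))
    have e2 : M ^ (j + 1) = M * M ^ j := (pow_succ' M j)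
    rw [e1, Matrix.mulVecLin_mul, LinearMap.range_comp, ih,
      ← LinearMap.range_comp, ← Matrix.mulVecLin_mul, ← e2]
    exact ih

private lemma range_pow_stable {N : ℕ} (M : Matrix (Fin N) (Fin N) ℂ) {k : ℕ}
    (hk : matIndex M ≤ k) :
    LinearMap.range ((M ^ k).mulVecLin)
      = LinearMap.range ((M ^ (matIndex M)).mulVecLin) := by
  induction k, hk using Nat.le_induction with
  | base => rfl
  | succ j hj ih => rw [range_pow_succ M hj, ih]

private lemma comm_pow {m n : ℕ} (A : Matrix (Fin m) (Fin n) ℂ)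
    (W : Matrix (Fin n) (Fin m) ℂ) (t : ℕ) :
    A * (W * A) ^ t = (A * W) ^ t * A := by
  induction t with
  | zero => simp
  | succ t ih =>
    rw [pow_succ, pow_succ, ← Matrix.mul_assoc, ih]
    rw [Matrix.mul_assoc ((A * W) ^ t) A (W * A), ← Matrix.mul_assoc A W A,
      ← Matrix.mul_assoc ((A * W) ^ t) (A * W) A]

theorem stmt10 {m n : ℕ} (A : Matrix (Fin m) (Fin n) ℂ) (W : Matrix (Fin n) (Fin m) ℂ)
    (Y : Matrix (Fin n) (Fin n) ℂ) (k : ℕ)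
    (hk : k = max (matIndex (A * W)) (matIndex (W * A))) (hY : IsCoreEP (W * A) Y) :
    LinearMap.range (A * (Y * Y)).mulVecLin
      = LinearMap.range ((A * W) ^ k).mulVecLin := by
  obtain ⟨hY1, hY2, _⟩ := hY
  set B := W * A with hB
  set l := matIndex B with hl
  have hkl : l ≤ k := hk ▸ le_max_right _ _
  have hkl' : matIndex (A * W) ≤ k := hk ▸ le_max_left _ _
  -- Y = B^t * Y^(t+1)
  have hrep : ∀ t : ℕ, Y = B ^ t * Y ^ (t + 1) := by
    intro t
    induction t with
    | zero => simp
    | succ t ih =>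
      have hstep : B * Y ^ (t + 2) = Y ^ (t + 1) := by
        have : Y ^ (t + 2) = Y * (Y * Y ^ t) := by
          rw [pow_succ' Y (t + 1), pow_succ' Y t]
        rw [this, ← Matrix.mul_assoc, ← Matrix.mul_assoc, hY2, ← pow_succ' Y t]
      calc Y = B ^ t * Y ^ (t + 1) := ih
        _ = B ^ t * (B * Y ^ (t + 2)) := by rw [hstep]
        _ = B ^ (t + 1) * Y ^ (t + 2) := by rw [← Matrix.mul_assoc, ← pow_succ]
  -- Y * B^(t+1) = B^t for t ≥ l
  have hann : ∀ t : ℕ, l ≤ t → Y * B ^ (t + 1) = B ^ t := by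
    intro t ht
    induction t, ht using Nat.le_induction with
    | base => exact hY1
    | succ j hj ih =>
      rw [pow_succ, ← Matrix.mul_assoc, ih, ← pow_succ]
  apply le_antisymm
  · -- A * (Y*Y) = (A*W)^k * A * Y^(k+2)
    have : A * (Y * Y) = (A * W) ^ k * (A * Y ^ (k + 2)) := by
      calc A * (Y * Y) = A * ((B ^ k * Y ^ (k + 1)) * Y) := by rw [← hrep k]
        _ = (A * B ^ k) * (Y ^ (k + 1) * Y) := by
            simp only [Matrix.mul_assoc]
        _ = ((A * W) ^ k * A) * Y ^ (k + 2) := by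
            rw [hB, comm_pow, ← pow_succ]
        _ = (A * W) ^ k * (A * Y ^ (k + 2)) := by rw [Matrix.mul_assoc]
    rw [this]
    exact range_mul_le _ _
  · -- (A*W)^(k+1) = (A * (Y*Y)) * (B^(k+2) * W)
    have key : A * (Y * Y) * B ^ (k + 2) = (A * W) ^ k * A := by
      have h1 : Y * B ^ (k + 2) = B ^ (k + 1) := hann (k + 1) (le_trans hkl (Nat.le_succ k))
      have h2 : Y * B ^ (k + 1) = B ^ k := hann k hkl
      calc A * (Y * Y) * B ^ (k + 2) = A * (Y * (Y * B ^ (k + 2))) := by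
            simp only [Matrix.mul_assoc]
        _ = A * (Y * B ^ (k + 1)) := by rw [h1]
        _ = A * B ^ k := by rw [h2]
        _ = (A * W) ^ k * A := by rw [hB, comm_pow]
    have hsucc : (A * W) ^ (k + 1) = (A * (Y * Y)) * (B ^ (k + 2) * W) := by
      calc (A * W) ^ (k + 1) = (A * W) ^ k * (A * W) := pow_succ _ _
        _ = ((A * W) ^ k * A) * W := by rw [Matrix.mul_assoc]
        _ = (A * (Y * Y) * B ^ (k + 2)) * W := by rw [← key]
        _ = (A * (Y * Y)) * (B ^ (k + 2) * W) := by rw [Matrix.mul_assoc]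
    calc LinearMap.range ((A * W) ^ k).mulVecLin
        = LinearMap.range ((A * W) ^ (k + 1)).mulVecLin :=
          (range_pow_succ (A * W) hkl').symm
      _ ≤ LinearMap.range (A * (Y * Y)).mulVecLin := by
          rw [hsucc]; exact range_mul_le _ _
end

section
/- Let A ∈ ℂ^{m×n}, W ∈ ℂ^{n×m} with k = max(ind(AW), ind(WA)). Then the null space of A^{⊕,W} equals the null space of ((WA)^k)^*. -/
open Matrix

/-- An eventually-not-strictly-decreasing ℕ sequence has a stabilization point. -/
lemma aux_exists_stab (f : ℕ → ℕ) (hf : ∀ j, f (j + 1) ≤ f j) : ∃ j, f j = f (j + 1) := by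
  by_contra h
  push_neg at h
  have hlt : ∀ j, f (j + 1) < f j := fun j => lt_of_le_of_ne (hf j) (fun e => h j e.symm)
  have key : ∀ j, f j + j ≤ f 0 := by
    intro j
    induction j with
    | zero => simp
    | succ j ih => have := hlt j; omega
  have := key (f 0 + 1)
  omega

/-- Matrix equality from pointwise mulVec equality. -/
lemma aux_mulVec_ext {n : ℕ} {B C : Matrix (Fin n) (Fin n) ℂ}
    (h : ∀ x, B.mulVec x = C.mulVec x) : B = C :=
  Matrix.toLin'.injective (LinearMap.ext h)

theorem stmt11 {m n : ℕ} (A : Matrix (Fin m) (Fin n) ℂ) (W : Matrix (Fin n) (Fin m) ℂ)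
    (Y : Matrix (Fin n) (Fin n) ℂ) (k : ℕ)
    (hk : k = max (matIndex (A * W)) (matIndex (W * A))) (hY : IsCoreEP (W * A) Y) :
    LinearMap.ker (A * (Y * Y)).mulVecLin
      = LinearMap.ker (((W * A) ^ k)ᴴ).mulVecLin := by
  set M := W * A with hM
  obtain ⟨h1, h2, h3⟩ := hY
  set t := matIndex M with ht
  have htk : t ≤ k := hk ▸ le_max_right _ _
  -- P = M*Y equals M^(j+1) * Y^(j+1)
  have hPj : ∀ j : ℕ, M ^ (j + 1) * Y ^ (j + 1) = M * Y := by
    intro j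
    induction j with
    | zero => simp
    | succ j ih =>
      calc M ^ (j + 2) * Y ^ (j + 2)
          = (M * M ^ (j + 1)) * (Y ^ (j + 1) * Y) := by rw [pow_succ' M, pow_succ Y]
        _ = M * ((M ^ (j + 1) * Y ^ (j + 1)) * Y) := by
            rw [mul_assoc, mul_assoc (M ^ (j + 1))]
        _ = M * Y := by rw [ih]; rw [show M * Y * Y = Y from h2]
  -- Y = M^j * Y^(j+1)
  have hYj : ∀ j : ℕ, M ^ j * Y ^ (j + 1) = Y := by
    intro j
    cases j with
    | zero => simp
    | succ j =>
      calc M ^ (j + 1) * Y ^ (j + 2)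
          = (M ^ (j + 1) * Y ^ (j + 1)) * Y := by rw [pow_succ Y, ← mul_assoc]
        _ = Y := by rw [hPj j]; exact h2
  -- Y * M * Y = Y
  have hYMY : Y * M * Y = Y := by
    calc Y * M * Y = Y * (M * Y) := by rw [mul_assoc]
      _ = Y * (M ^ (t + 2) * Y ^ (t + 2)) := by rw [hPj (t + 1)]
      _ = (Y * M ^ (t + 1)) * (M * Y ^ (t + 2)) := by
          rw [pow_succ M (t + 1), mul_assoc, mul_assoc]
      _ = M ^ t * (M * Y ^ (t + 2)) := by rw [h1]
      _ = M ^ (t + 1) * Y ^ (t + 2) := by rw [← mul_assoc, ← pow_succ M t]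
      _ = Y := hYj (t + 1)
  -- P * M^(t+1) = M^(t+1)
  have hPM1 : (M * Y) * M ^ (t + 1) = M ^ (t + 1) := by
    rw [mul_assoc, h1, ← pow_succ' M t]
  -- rank stabilization at t
  have hne : {j | (M ^ j).rank = (M ^ (j + 1)).rank}.Nonempty := by
    obtain ⟨j, hj⟩ := aux_exists_stab (fun j => (M ^ j).rank)
      (fun j => by simpa [pow_succ] using Matrix.rank_mul_le_left (M ^ j) M)
    exact ⟨j, hj⟩
  have hrank : (M ^ t).rank = (M ^ (t + 1)).rank := Nat.sInf_mem hne
  -- range equality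
  have hle : LinearMap.range (M ^ (t + 1)).mulVecLin ≤ LinearMap.range (M ^ t).mulVecLin := by
    rintro x ⟨y, rfl⟩
    refine ⟨M.mulVec y, ?_⟩
    simp only [mulVecLin_apply]
    rw [mulVec_mulVec, ← pow_succ M t]
  have hrange : LinearMap.range (M ^ (t + 1)).mulVecLin
      = LinearMap.range (M ^ t).mulVecLin := by
    apply Submodule.eq_of_le_of_finrank_le hle
    exact le_of_eq hrank
  -- P * M^t = M^t
  have hPMt : (M * Y) * M ^ t = M ^ t := by
    apply aux_mulVec_ext
    intro x
    have hx : (M ^ t).mulVec x ∈ LinearMap.range (M ^ (t + 1)).mulVecLin := by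
      rw [hrange]; exact ⟨x, rfl⟩
    obtain ⟨y, hy⟩ := hx
    simp only [mulVecLin_apply] at hy
    rw [← mulVec_mulVec, ← hy, mulVec_mulVec, hPM1]
  -- P * M^k = M^k
  have hPMk : (M * Y) * M ^ k = M ^ k := by
    obtain ⟨d, rfl⟩ : ∃ d, k = t + d := ⟨k - t, (Nat.add_sub_cancel' htk).symm⟩
    rw [pow_add, ← mul_assoc, hPMt]
  -- key conj-transpose identity
  have hH : (M ^ k)ᴴ * (M * Y) = (M ^ k)ᴴ := by
    conv_lhs => rw [← h3, ← conjTranspose_mul, hPMk]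
  ext x
  simp only [LinearMap.mem_ker, mulVecLin_apply]
  constructor
  · intro hx
    have hYx : Y.mulVec x = 0 := by
      have hWA : Y = W * (A * (Y * Y)) := by
        rw [← Matrix.mul_assoc W A, ← hM, ← mul_assoc, h2]
      calc Y.mulVec x = (W * (A * (Y * Y))).mulVec x := by rw [← hWA]
        _ = W.mulVec ((A * (Y * Y)).mulVec x) := (mulVec_mulVec _ _ _).symm
        _ = 0 := by rw [hx, mulVec_zero]
    have hPx : (M * Y).mulVec x = 0 := by
      rw [← mulVec_mulVec, hYx, mulVec_zero]
    calc ((M ^ k)ᴴ).mulVec x = ((M ^ k)ᴴ * (M * Y)).mulVec x := by rw [hH]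
      _ = ((M ^ k)ᴴ).mulVec ((M * Y).mulVec x) := (mulVec_mulVec _ _ _).symm
      _ = 0 := by rw [hPx, mulVec_zero]
  · intro hx
    have hPx : (M * Y).mulVec x = 0 := by
      have hPrep : M * Y = (Y ^ (k + 1))ᴴ * (Mᴴ * (M ^ k)ᴴ) := by
        rw [← conjTranspose_mul, ← pow_succ M k, ← conjTranspose_mul, hPj k, h3]
      rw [hPrep, ← mulVec_mulVec, ← mulVec_mulVec, hx, mulVec_zero, mulVec_zero]
    have hYx : Y.mulVec x = 0 := by
      calc Y.mulVec x = (Y * (M * Y)).mulVec x := by rw [← mul_assoc, hYMY]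
        _ = Y.mulVec ((M * Y).mulVec x) := (mulVec_mulVec _ _ _).symm
        _ = 0 := by rw [hPx, mulVec_zero]
    rw [← mulVec_mulVec, ← mulVec_mulVec, hYx, mulVec_zero, mulVec_zero]
end

section
/- Let A ∈ ℂ^{m×n}, W ∈ ℂ^{n×m} with ind(WA) = k. Then ℂ^m is the internal direct sum of the range of A^{⊕,W}*W and the null space of A^{⊕,W}*W. -/
open Matrix

theorem stmt12 {m n : ℕ} (A : Matrix (Fin m) (Fin n) ℂ) (W : Matrix (Fin n) (Fin m) ℂ)
    (Y : Matrix (Fin n) (Fin n) ℂ) (k : ℕ)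
    (hk : k = matIndex (W * A)) (hY : IsCoreEP (W * A) Y) :
    IsCompl (LinearMap.range (A * (Y * Y) * W).mulVecLin)
      (LinearMap.ker (A * (Y * Y) * W).mulVecLin) := by
  obtain ⟨-, h2, -⟩ := hY
  set M : Matrix (Fin m) (Fin m) ℂ := A * (Y * Y) * W with hM
  -- key identity: W * M = Y * W
  have hWM : W * M = Y * W := by
    have e : W * (A * (Y * Y) * W) = (W * A * Y * Y) * W := by
      simp only [Matrix.mul_assoc]
    rw [hM, e, h2]
  have hdisj : Disjoint (LinearMap.range M.mulVecLin) (LinearMap.ker M.mulVecLin) := by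
    rw [disjoint_iff_inf_le]
    rintro x ⟨⟨y, rfl⟩, hker⟩
    simp only [SetLike.mem_coe, LinearMap.mem_ker, mulVecLin_apply] at hker ⊢
    -- from M.mulVec (M.mulVec y) = 0 derive (Y*Y*W).mulVec y = 0
    have hY2W : ((Y * Y) * W).mulVec y = 0 := by
      have hN : W * M * M = Y * Y * W := by
        rw [hWM, Matrix.mul_assoc Y W M, hWM, ← Matrix.mul_assoc]
      have h0 := congrArg W.mulVec hker
      simp only [mulVec_mulVec, mulVec_zero, ← Matrix.mul_assoc] at h0
      rwa [hN] at h0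
    have : M.mulVec y = A.mulVec (((Y * Y) * W).mulVec y) := by
      rw [mulVec_mulVec, hM, Matrix.mul_assoc]
    rw [this, hY2W, mulVec_zero]
    rfl
  refine ⟨hdisj, ?_⟩
  rw [codisjoint_iff]
  apply Submodule.eq_top_of_finrank_eq
  have hrn := LinearMap.finrank_range_add_finrank_ker M.mulVecLin
  have hsum := Submodule.finrank_sup_add_finrank_inf_eq
    (LinearMap.range M.mulVecLin) (LinearMap.ker M.mulVecLin)
  rw [disjoint_iff.mp hdisj, finrank_bot, add_zero] at hsum
  rw [hsum, hrn]
end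

section
/- Let A ∈ ℂ^{m×n}, W ∈ ℂ^{n×m} with ind(WA) = k. Then the matrix P = W*A*W*A^{⊕,W} is an orthogonal projector (P^2 = P and P^* = P) whose range equals the range of (WA)^k. -/
open Matrix

theorem stmt13 {m n : ℕ} (A : Matrix (Fin m) (Fin n) ℂ) (W : Matrix (Fin n) (Fin m) ℂ)
    (Y : Matrix (Fin n) (Fin n) ℂ) (k : ℕ)
    (hk : k = matIndex (W * A)) (hY : IsCoreEP (W * A) Y) :
    (W * A * W * (A * (Y * Y))) * (W * A * W * (A * (Y * Y))) = W * A * W * (A * (Y * Y)) ∧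
    (W * A * W * (A * (Y * Y)))ᴴ = W * A * W * (A * (Y * Y)) ∧
    LinearMap.range (W * A * W * (A * (Y * Y))).mulVecLin
      = LinearMap.range ((W * A) ^ k).mulVecLin := by
  obtain ⟨h1, h2, h3⟩ := hY
  rw [← hk] at h1
  set M := W * A with hM
  have h2' : M * (Y * Y) = Y := by rw [← Matrix.mul_assoc, h2]
  have hP : W * A * W * (A * (Y * Y)) = M * Y := by
    have h : W * A * W * (A * (Y * Y)) = M * (M * (Y * Y)) := by
      simp only [hM, Matrix.mul_assoc]
    rw [h, h2']
  have hYpow : ∀ j : ℕ, Y = M ^ j * Y ^ (j + 1) := by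
    intro j
    induction j with
    | zero => simp
    | succ j ih =>
      have hY2 : Y ^ (j + 1) = M * Y ^ (j + 2) := by
        calc Y ^ (j+1) = Y * Y ^ j := by rw [pow_succ']
        _ = (M * Y * Y) * Y ^ j := by rw [h2]
        _ = M * (Y * (Y * Y ^ j)) := by simp [Matrix.mul_assoc]
        _ = M * Y ^ (j + 2) := by rw [show Y * (Y * Y ^ j) = Y ^ (j+2) by
              rw [← pow_succ', ← pow_succ']]
      calc Y = M ^ j * Y ^ (j + 1) := ih
      _ = M ^ j * (M * Y ^ (j+2)) := by rw [hY2]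
      _ = M ^ (j+1) * Y ^ (j+2) := by rw [← Matrix.mul_assoc, ← pow_succ]
  have hMY : M * Y = M ^ (k+1) * Y ^ (k+1) := by
    conv_lhs => rw [hYpow k]
    rw [← Matrix.mul_assoc, ← pow_succ']
  have hMk : M * Y * M ^ k = M ^ k := by
    calc M * Y * M ^ k = M * Y * (Y * M ^ (k+1)) := by rw [h1]
    _ = (M * Y * Y) * M ^ (k+1) := by simp [Matrix.mul_assoc]
    _ = Y * M ^ (k+1) := by rw [h2]
    _ = M ^ k := h1
  have hIdem : (M * Y) * (M * Y) = M * Y := by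
    calc (M*Y)*(M*Y) = (M*Y) * (M ^ (k+1) * Y ^ (k+1)) := by rw [← hMY]
    _ = M * (Y * M ^ (k+1)) * Y ^ (k+1) := by simp [Matrix.mul_assoc]
    _ = M * M ^ k * Y ^ (k+1) := by rw [h1]
    _ = M ^ (k+1) * Y ^ (k+1) := by rw [← pow_succ']
    _ = M * Y := hMY.symm
  refine ⟨by rw [hP]; exact hIdem, by rw [hP]; exact h3, ?_⟩
  rw [hP]
  apply le_antisymm
  · have h : M * Y = M ^ k * (M * Y ^ (k+1)) := by
      rw [hMY, pow_succ, Matrix.mul_assoc]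
    rw [h, Matrix.mulVecLin_mul]
    exact LinearMap.range_comp_le_range _ _
  · conv_lhs => rw [← hMk]
    rw [Matrix.mulVecLin_mul]
    exact LinearMap.range_comp_le_range _ _
end

section
/- Let A ∈ ℂ^{m×n}, W ∈ ℂ^{n×m} with ind(WA) = k. Then Q = W*A^{⊕,W}*W*A is idempotent (Q^2 = Q), its range equals the range of (WA)^k, and its null space equals the null space of ((WA)^k)^† * W * A. -/
open Matrix

lemma range_mul_le_s14 {n : ℕ} (A B : Matrix (Fin n) (Fin n) ℂ) :
    LinearMap.range (A * B).mulVecLin ≤ LinearMap.range A.mulVecLin := by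
  rw [Matrix.mulVecLin_mul]; exact LinearMap.range_comp_le_range _ _

lemma ker_le_ker_mul {n : ℕ} (A B : Matrix (Fin n) (Fin n) ℂ) :
    LinearMap.ker B.mulVecLin ≤ LinearMap.ker (A * B).mulVecLin := by
  rw [Matrix.mulVecLin_mul]; exact LinearMap.ker_le_ker_comp _ _

theorem stmt14 {m n : ℕ} (A : Matrix (Fin m) (Fin n) ℂ) (W : Matrix (Fin n) (Fin m) ℂ)
    (Y P : Matrix (Fin n) (Fin n) ℂ) (k : ℕ)
    (hk : k = matIndex (W * A)) (hY : IsCoreEP (W * A) Y) (hP : IsMP ((W * A) ^ k) P) :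
    (W * (A * (Y * Y)) * (W * A)) * (W * (A * (Y * Y)) * (W * A)) = W * (A * (Y * Y)) * (W * A) ∧
    LinearMap.range (W * (A * (Y * Y)) * (W * A)).mulVecLin
      = LinearMap.range ((W * A) ^ k).mulVecLin ∧
    LinearMap.ker (W * (A * (Y * Y)) * (W * A)).mulVecLin
      = LinearMap.ker (P * (W * A)).mulVecLin := by
  set M := W * A with hM
  obtain ⟨h1, h2, h3⟩ := hY
  rw [← hk] at h1
  obtain ⟨hP1, hP2, hP3, hP4⟩ := hP
  have hQ : W * (A * (Y * Y)) * (W * A) = Y * M := by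
    rw [hM, show W * (A * (Y * Y)) = W * A * Y * Y by rw [Matrix.mul_assoc, Matrix.mul_assoc], h2]
  have d1 : ∀ j : ℕ, Y = M ^ j * Y ^ (j + 1) := by
    intro j
    induction j with
    | zero => simp
    | succ j ih =>
      calc Y = M * Y * Y := h2.symm
        _ = M * (M ^ j * Y ^ (j + 1)) * Y := by rw [← ih]
        _ = (M * M ^ j) * (Y ^ (j + 1) * Y) := by simp only [mul_assoc]
        _ = M ^ (j + 1) * Y ^ (j + 2) := by rw [← pow_succ', ← pow_succ]
  have d2 : Y * M ^ (k + 2) = M ^ (k + 1) := by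
    rw [show (k : ℕ) + 2 = (k + 1) + 1 from rfl, pow_succ, ← mul_assoc, h1, ← pow_succ]
  have d3 : Y * M * Y = Y := by
    calc Y * M * Y = Y * M * (M ^ (k + 1) * Y ^ (k + 2)) := by rw [← d1 (k + 1)]
      _ = Y * (M * M ^ (k + 1)) * Y ^ (k + 2) := by simp only [mul_assoc]
      _ = Y * M ^ (k + 2) * Y ^ (k + 2) := by rw [← pow_succ']
      _ = M ^ (k + 1) * Y ^ (k + 2) := by rw [d2]
      _ = Y := (d1 (k + 1)).symm
  have part1 : Y * M * (Y * M) = Y * M := by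
    calc Y * M * (Y * M) = (Y * M * Y) * M := by simp only [mul_assoc]
      _ = Y * M := by rw [d3]
  have e1 : M ^ k * P * (M * Y) = M * Y := by
    have hMY : M * Y = M ^ k * (M ^ 2 * Y ^ (k + 2)) := by
      calc M * Y = M * (M ^ (k + 1) * Y ^ (k + 2)) := by rw [← d1 (k + 1)]
        _ = (M * M ^ (k + 1)) * Y ^ (k + 2) := by simp only [mul_assoc]
        _ = M ^ (k + 2) * Y ^ (k + 2) := by rw [← pow_succ']
        _ = (M ^ k * M ^ 2) * Y ^ (k + 2) := by rw [← pow_add]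
        _ = M ^ k * (M ^ 2 * Y ^ (k + 2)) := by simp only [mul_assoc]
    calc M ^ k * P * (M * Y) = M ^ k * P * (M ^ k * (M ^ 2 * Y ^ (k + 2))) := by rw [← hMY]
      _ = (M ^ k * P * M ^ k) * (M ^ 2 * Y ^ (k + 2)) := by simp only [mul_assoc]
      _ = M ^ k * (M ^ 2 * Y ^ (k + 2)) := by rw [hP1]
      _ = M * Y := hMY.symm
  have e2 : M * Y * (M ^ k * P) = M ^ k * P := by
    have hc : M * Y * M ^ k = M ^ k := by
      calc M * Y * M ^ k = M * Y * (Y * M ^ (k + 1)) := by rw [h1]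
        _ = (M * Y * Y) * M ^ (k + 1) := by simp only [mul_assoc]
        _ = M ^ k := by rw [h2, h1]
    rw [← mul_assoc, hc]
  have eEF : M * Y = M ^ k * P := by
    have h4 : (M * Y) * (M ^ k * P) = M * Y := by
      have := congrArg conjTranspose e1
      rwa [Matrix.conjTranspose_mul, h3, hP3] at this
    rw [← h4, e2]
  have part2 : LinearMap.range (Y * M).mulVecLin = LinearMap.range (M ^ k).mulVecLin := by
    apply le_antisymm
    · have hf : Y * M = M ^ k * (M * Y ^ (k + 2) * M) := by
        calc Y * M = M ^ (k + 1) * Y ^ (k + 2) * M := by rw [← d1 (k + 1)]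
          _ = (M ^ k * M) * Y ^ (k + 2) * M := by rw [pow_succ]
          _ = M ^ k * (M * Y ^ (k + 2) * M) := by simp only [mul_assoc]
      rw [hf]; exact range_mul_le_s14 _ _
    · have hf : M ^ k = Y * M * M ^ k := by
        calc M ^ k = Y * M ^ (k + 1) := h1.symm
          _ = Y * (M * M ^ k) := by rw [pow_succ']
          _ = Y * M * M ^ k := by simp only [mul_assoc]
      conv_lhs => rw [hf]
      exact range_mul_le_s14 _ _
  have part3 : LinearMap.ker (Y * M).mulVecLin = LinearMap.ker (P * M).mulVecLin := by
    apply le_antisymm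
    · have hf : P * M = P * M * (Y * M) := by
        calc P * M = (P * M ^ k * P) * M := by rw [hP2]
          _ = P * ((M ^ k * P) * M) := by simp only [mul_assoc]
          _ = P * ((M * Y) * M) := by rw [← eEF]
          _ = P * M * (Y * M) := by simp only [mul_assoc]
      conv_rhs => rw [hf]
      exact ker_le_ker_mul _ _
    · have hf : Y * M = Y * M ^ k * (P * M) := by
        calc Y * M = (Y * M * Y) * M := by rw [d3]
          _ = Y * ((M * Y) * M) := by simp only [mul_assoc]
          _ = Y * ((M ^ k * P) * M) := by rw [eEF]
          _ = Y * M ^ k * (P * M) := by simp only [mul_assoc]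
      conv_rhs => rw [hf]
      exact ker_le_ker_mul _ _
  refine ⟨?_, ?_, ?_⟩
  · rw [hQ]; exact part1
  · rw [hQ]; exact part2
  · rw [hQ, hM]; exact part3
end

section
/- Let A ∈ ℂ^{m×n}, W ∈ ℂ^{n×m} with ind(WA) = k. Then A^{⊕,W} = A^{D,W} * (WA)^k * ((WA)^k)^†, where A^{D,W} = A*((WA)^D)^2 is the W-weighted Drazin inverse. -/
open Matrix

theorem stmt15 {m n : ℕ} (A : Matrix (Fin m) (Fin n) ℂ) (W : Matrix (Fin n) (Fin m) ℂ)
    (Y D P : Matrix (Fin n) (Fin n) ℂ) (k : ℕ)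
    (hk : k = matIndex (W * A)) (hY : IsCoreEP (W * A) Y) (hD : IsDrazin (W * A) D)
    (hP : IsMP ((W * A) ^ k) P) :
    A * (Y * Y) = (A * (D * D)) * (W * A) ^ k * P := by
  set M := W * A with hM
  obtain ⟨hY1, hY2, hY3⟩ := hY
  obtain ⟨hD1, hD2, hD3⟩ := hD
  obtain ⟨hP1, hP2, hP3, hP4⟩ := hP
  rw [← hk] at hY1 hD3
  -- Y = M^j * Y^(j+1)
  have hpow : ∀ j : ℕ, M ^ j * Y ^ (j + 1) = Y := by
    intro j
    induction j with
    | zero => simp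
    | succ j ih =>
      have : Y ^ (j + 1 + 1) = Y * Y * Y ^ j := by
        rw [show j + 1 + 1 = 2 + j from by ring, pow_add, pow_two]
      rw [this, pow_succ, mul_assoc, ← mul_assoc M, ← mul_assoc M, hY2]
      have : Y * Y ^ j = Y ^ (j + 1) := (pow_succ' Y j).symm
      rw [this] at *
      rw [ih]
  have hMY : M * Y = M ^ (k + 1) * Y ^ (k + 1) := by
    rw [pow_succ', mul_assoc, hpow]
  -- D * (M * Y) = Y
  have hcomm : ∀ j : ℕ, D * M ^ j = M ^ j * D := fun j =>
    ((Commute.symm (hD1 : Commute M D)).pow_right j).eq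
  have hDMY : D * (M * Y) = Y := by
    rw [hMY, ← mul_assoc, hcomm, hD3, hpow]
  -- Y * M^k = M^k * D
  have hYMk : Y * M ^ k = M ^ k * D := by
    conv_lhs => rw [← hD3]
    rw [← mul_assoc, hY1]
  -- M * Y * M^k = M^k
  have hMYMk : M * Y * M ^ k = M ^ k := by
    rw [mul_assoc, hYMk, ← mul_assoc, ← pow_succ', hD3]
  -- (M^k * P) * (M * Y) = M * Y
  have hQMY : M ^ k * P * (M * Y) = M * Y := by
    conv_lhs => rw [hMY, pow_succ]
    simp only [← mul_assoc]
    rw [hP1, ← pow_succ, ← hMY]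
  -- M * Y * (M^k * P) = M * Y  via conjugate transpose
  have hMYQ : M * Y * (M ^ k * P) = M * Y := by
    have := congrArg conjTranspose hQMY
    rwa [conjTranspose_mul, hY3, hP3] at this
  -- M * Y = M^k * P
  have hkey : M * Y = M ^ k * P := by
    rw [← hMYQ, ← mul_assoc, hMYMk]
  -- Y * Y = D * D * (M^k * P)
  have hYY : Y * Y = D * (D * (M ^ k * P)) := by
    calc Y * Y = D * (M * Y) * Y := by rw [hDMY]
    _ = D * (M * Y * Y) := by rw [mul_assoc, mul_assoc]
    _ = D * (D * (M * Y)) := by rw [hY2, hDMY]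
    _ = D * (D * (M ^ k * P)) := by rw [hkey]
  rw [hYY]
  simp only [Matrix.mul_assoc]
end

section
/- Let A ∈ ℂ^{m×n}, W ∈ ℂ^{n×m} with ind(WA) = k. Then A^{D,W} = A^{⊕,W} * W * A * (WA)^D, where A^{D,W} = A*((WA)^D)^2 is the W-weighted Drazin inverse. -/
open Matrix

theorem stmt16 {m n : ℕ} (A : Matrix (Fin m) (Fin n) ℂ) (W : Matrix (Fin n) (Fin m) ℂ)
    (Y D : Matrix (Fin n) (Fin n) ℂ) (k : ℕ)
    (hk : k = matIndex (W * A)) (hY : IsCoreEP (W * A) Y) (hD : IsDrazin (W * A) D) :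
    A * (D * D) = (A * (Y * Y)) * W * A * D := by
  set M := W * A with hM
  have hc : M * D = D * M := hD.1
  have hd2 : D * M * D = D := hD.2.1
  have hY1 : Y * M ^ (k + 1) = M ^ k := by rw [hk]; exact hY.1
  have hMk : M ^ (k + 1) * D = M ^ k := by rw [hk]; exact hD.2.2
  have hcp : ∀ j : ℕ, M * D ^ j = D ^ j * M := fun j => (Commute.pow_right hc j).eq
  -- D = M^j * D^(j+1)
  have hrep : ∀ j : ℕ, M ^ j * D ^ (j + 1) = D := by
    intro j
    induction j with
    | zero => simp
    | succ j ih =>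
      calc M ^ (j + 1) * D ^ (j + 1 + 1)
          = (M ^ j * M) * (D ^ (j + 1) * D) := by rw [pow_succ, pow_succ]
        _ = M ^ j * (M * D ^ (j + 1)) * D := by rw [mul_assoc, ← mul_assoc M, ← mul_assoc]
        _ = M ^ j * (D ^ (j + 1) * M) * D := by rw [hcp]
        _ = (M ^ j * D ^ (j + 1)) * (M * D) := by rw [mul_assoc, mul_assoc, mul_assoc]
        _ = D * M * D := by rw [ih, ← mul_assoc]
        _ = D := hd2
  have key : Y * (Y * (M * D)) = D * D := by
    have hMD : M * D = M ^ (k + 1) * D ^ (k + 1) := by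
      rw [pow_succ', mul_assoc, hrep]
    calc Y * (Y * (M * D))
        = Y * (Y * (M ^ (k + 1) * D ^ (k + 1))) := by rw [hMD]
      _ = Y * ((Y * M ^ (k + 1)) * D ^ (k + 1)) := by rw [mul_assoc]
      _ = Y * (M ^ k * D ^ (k + 1)) := by rw [hY1]
      _ = Y * ((M ^ (k + 1) * D) * D ^ (k + 1)) := by rw [hMk]
      _ = (Y * M ^ (k + 1)) * (D * D ^ (k + 1)) := by rw [mul_assoc, mul_assoc]
      _ = M ^ k * (D ^ (k + 1) * D) := by
          rw [hY1, (Commute.refl D).pow_right (k + 1) |>.eq]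
      _ = (M ^ k * D ^ (k + 1)) * D := by rw [mul_assoc]
      _ = D * D := by rw [hrep]
  calc A * (D * D) = A * (Y * (Y * (M * D))) := by rw [key]
    _ = (A * (Y * Y)) * W * A * D := by
        rw [hM]; simp only [Matrix.mul_assoc]
end

section
/- Let A ∈ ℂ^{m×n}, W ∈ ℂ^{n×m} with k = max(ind(AW), ind(WA)), and set B = (AW)^k, C = ((WA)^k)^*, X = A^{⊕,W}. Then there exist matrices S ∈ ℂ^{m×m} and T ∈ ℂ^{n×n} with X = B*S*X and X = X*T*C, and moreover X*(W*A*W)*B = B and C*(W*A*W)*X = C. That is, A^{⊕,W} is the (B,C)-inverse of WAW. -/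
open Matrix

/-
Put M = W A and X = A Y², with Y the core-EP inverse of M. The identities defining Y give
Y = M^j Y^(j+1) for every j, and Y M^(k+1) = M^k and M Y M^k = M^k once k ≥ ind(M); moving A
across powers by A (W A)^j = (A W)^j A reduces each of the four conditions to one of these.
The index of A W enters only through X (W A W) (A W)^k = (A W)^k, which needs a factorization
(A W)^k = (A W)^(k+1) Z: the ranks of (A W)^k and (A W)^(k+1) agree, and the range of the second
lies in that of the first, so the two ranges coincide.
-/

theorem Matrix.exists_eq_mul_of_range_le {R : Type*} [CommRing R] {l m n : Type*}
    [Fintype m] [Fintype n] [DecidableEq n] {A : Matrix l m R} {B : Matrix l n R}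
    (h : LinearMap.range B.mulVecLin ≤ LinearMap.range A.mulVecLin) :
    ∃ Z : Matrix m n R, B = A * Z := by
  obtain ⟨g, hg⟩ := Module.projective_lifting_property A.mulVecLin.rangeRestrict
    (B.mulVecLin.codRestrict _ fun v => h ⟨v, rfl⟩) A.mulVecLin.surjective_rangeRestrict
  refine ⟨LinearMap.toMatrix' g, Matrix.toLin'.injective ?_⟩
  refine LinearMap.ext fun v => ?_
  simpa [← mulVec_mulVec] using (congr_arg Subtype.val (LinearMap.congr_fun hg v)).symm

section Index

variable {p : ℕ} (N : Matrix (Fin p) (Fin p) ℂ)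

theorem rank_pow_matIndex_succ : (N ^ (matIndex N + 1)).rank = (N ^ matIndex N).rank := by
  refine (Nat.sInf_mem (s := {j | (N ^ j).rank = (N ^ (j + 1)).rank}) ?_).symm
  obtain ⟨j, hj⟩ := WellFounded.not_rel_apply_succ (r := (· < ·)) fun j => (N ^ j).rank
  have hle : (N ^ (j + 1)).rank ≤ (N ^ j).rank := by
    rw [pow_succ]
    exact rank_mul_le_left _ _
  exact ⟨j, (le_of_not_gt hj).antisymm hle⟩

theorem exists_pow_matIndex_eq_pow_succ_mul :
    ∃ Z, N ^ matIndex N = N ^ (matIndex N + 1) * Z := by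
  refine exists_eq_mul_of_range_le (Submodule.eq_of_le_of_finrank_le ?_ ?_).ge
  · rw [pow_succ, mulVecLin_mul]
    exact LinearMap.range_comp_le_range _ _
  · exact (rank_pow_matIndex_succ N).ge

theorem exists_pow_eq_pow_succ_mul {k : ℕ} (hk : matIndex N ≤ k) :
    ∃ Z, N ^ k = N ^ (k + 1) * Z := by
  obtain ⟨Z, hZ⟩ := exists_pow_matIndex_eq_pow_succ_mul N
  refine ⟨Z, ?_⟩
  obtain ⟨d, rfl⟩ := Nat.exists_eq_add_of_le hk
  rw [add_comm, pow_add, hZ, ← mul_assoc, ← pow_add, add_assoc, add_comm d]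

end Index

theorem Matrix.pow_mul_mul_eq_mul_mul_pow {R : Type*} [Semiring R] {m n : Type*}
    [Fintype m] [Fintype n] [DecidableEq m] [DecidableEq n] (A : Matrix m n R)
    (B : Matrix n m R) (j : ℕ) : (A * B) ^ j * A = A * (B * A) ^ j := by
  induction j with
  | zero => simp
  | succ j ih =>
    rw [pow_succ, pow_succ, Matrix.mul_assoc _ (A * B), Matrix.mul_assoc A B A,
      ← Matrix.mul_assoc _ A, ih, Matrix.mul_assoc]

namespace IsCoreEP

section Square

variable {p : ℕ} {M Y : Matrix (Fin p) (Fin p) ℂ}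

theorem eq_pow_mul_pow_succ (hY : IsCoreEP M Y) (j : ℕ) : Y = M ^ j * Y ^ (j + 1) := by
  induction j with
  | zero => simp
  | succ j ih =>
    rw [pow_succ M j, pow_succ' Y (j + 1), pow_succ' Y j, mul_assoc (M ^ j), ← mul_assoc M Y,
      ← mul_assoc (M * Y) Y, hY.2.1, ← pow_succ']
    exact ih

theorem mul_mul_self (hY : IsCoreEP M Y) : Y * M * Y = Y :=
  calc Y * M * Y = Y * M * (M ^ matIndex M * Y ^ (matIndex M + 1)) := by
        rw [← hY.eq_pow_mul_pow_succ]
    _ = Y * M ^ (matIndex M + 1) * Y ^ (matIndex M + 1) := by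
        simp only [pow_succ', mul_assoc]
    _ = Y := by rw [hY.1, ← hY.eq_pow_mul_pow_succ]

theorem pow_succ_mul_pow_succ (hY : IsCoreEP M Y) (j : ℕ) : M ^ (j + 1) * Y ^ (j + 1) = M * Y := by
  rw [pow_succ', mul_assoc, ← hY.eq_pow_mul_pow_succ]

theorem mul_pow_succ_of_matIndex_le (hY : IsCoreEP M Y) {k : ℕ} (hk : matIndex M ≤ k) :
    Y * M ^ (k + 1) = M ^ k := by
  obtain ⟨d, rfl⟩ := Nat.exists_eq_add_of_le hk
  rw [add_right_comm, pow_add, ← mul_assoc, hY.1, ← pow_add]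

theorem mul_mul_pow_of_matIndex_le (hY : IsCoreEP M Y) {k : ℕ} (hk : matIndex M ≤ k) :
    M * Y * M ^ k = M ^ k :=
  calc M * Y * M ^ k = M * Y * Y * M ^ (k + 1) := by
        rw [mul_assoc (M * Y) Y, hY.mul_pow_succ_of_matIndex_le hk]
    _ = M ^ k := by rw [hY.2.1, hY.mul_pow_succ_of_matIndex_le hk]

end Square

variable {m n : ℕ} {A : Matrix (Fin m) (Fin n) ℂ} {W : Matrix (Fin n) (Fin m) ℂ}
  {Y : Matrix (Fin n) (Fin n) ℂ}

theorem exists_weighted_eq_pow_mul_mul (hY : IsCoreEP (W * A) Y) (k : ℕ) :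
    ∃ S : Matrix (Fin m) (Fin m) ℂ, A * (Y * Y) = (A * W) ^ k * S * (A * (Y * Y)) := by
  refine ⟨A * Y ^ (k + 1) * W, ?_⟩
  calc A * (Y * Y) = A * ((W * A) ^ k * Y ^ (k + 1) * Y) := by
        rw [← hY.eq_pow_mul_pow_succ]
    _ = A * ((W * A) ^ k * Y ^ (k + 1) * (W * A * Y * Y)) := by rw [hY.2.1]
    _ = (A * W) ^ k * (A * Y ^ (k + 1) * W) * (A * (Y * Y)) := by
        simp only [← Matrix.mul_assoc, pow_mul_mul_eq_mul_mul_pow]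

theorem exists_weighted_eq_mul_mul_pow_conjTranspose (hY : IsCoreEP (W * A) Y) (k : ℕ) :
    ∃ T : Matrix (Fin n) (Fin n) ℂ, A * (Y * Y) = A * (Y * Y) * T * ((W * A) ^ k)ᴴ := by
  have hT : (W * A * Y ^ (k + 1))ᴴ * ((W * A) ^ k)ᴴ = W * A * Y := by
    rw [← conjTranspose_mul, ← mul_assoc, ← pow_succ, hY.pow_succ_mul_pow_succ, hY.2.2]
  refine ⟨(W * A * Y ^ (k + 1))ᴴ, ?_⟩
  rw [Matrix.mul_assoc (A * (Y * Y)), hT, Matrix.mul_assoc A, mul_assoc Y,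
    ← mul_assoc Y (W * A), hY.mul_mul_self]

theorem pow_conjTranspose_mul_mul_weighted (hY : IsCoreEP (W * A) Y) {k : ℕ}
    (hk : matIndex (W * A) ≤ k) :
    ((W * A) ^ k)ᴴ * (W * A * W) * (A * (Y * Y)) = ((W * A) ^ k)ᴴ :=
  calc ((W * A) ^ k)ᴴ * (W * A * W) * (A * (Y * Y))
      = ((W * A) ^ k)ᴴ * (W * A * (W * A * Y * Y)) := by simp only [Matrix.mul_assoc]
    _ = ((W * A) ^ k)ᴴ * (W * A * Y)ᴴ := by rw [hY.2.1, hY.2.2]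
    _ = ((W * A) ^ k)ᴴ := by rw [← conjTranspose_mul, hY.mul_mul_pow_of_matIndex_le hk]

theorem weighted_mul_mul_pow (hY : IsCoreEP (W * A) Y) {k : ℕ} (hWA : matIndex (W * A) ≤ k)
    (hAW : matIndex (A * W) ≤ k) :
    A * (Y * Y) * (W * A * W) * (A * W) ^ k = (A * W) ^ k := by
  obtain ⟨Z, hZ⟩ := exists_pow_eq_pow_succ_mul (A * W) hAW
  have hpow : ∀ j, (W * A) ^ j * W = W * (A * W) ^ j := pow_mul_mul_eq_mul_mul_pow W A
  have hAYMW : A * Y * (W * A) ^ k * W = (A * W) ^ k :=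
    calc A * Y * (W * A) ^ k * W = A * Y * (W * ((A * W) ^ (k + 1) * Z)) := by
          rw [← hZ, Matrix.mul_assoc _ _ W, hpow]
      _ = A * (Y * (W * A) ^ (k + 1)) * W * Z := by
          rw [← Matrix.mul_assoc W, ← hpow]
          simp only [Matrix.mul_assoc]
      _ = (A * W) ^ (k + 1) * Z := by
          rw [hY.mul_pow_succ_of_matIndex_le hWA, pow_succ, ← pow_mul_mul_eq_mul_mul_pow A W k]
          simp only [Matrix.mul_assoc]
      _ = (A * W) ^ k := hZ.symm
  calc A * (Y * Y) * (W * A * W) * (A * W) ^ k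
      = A * Y * (Y * (W * A) ^ (k + 1)) * W := by
        simp only [pow_succ', Matrix.mul_assoc, hpow]
    _ = (A * W) ^ k := by rw [hY.mul_pow_succ_of_matIndex_le hWA, hAYMW]

end IsCoreEP

theorem stmt18 {m n : ℕ} (A : Matrix (Fin m) (Fin n) ℂ) (W : Matrix (Fin n) (Fin m) ℂ)
    (Y : Matrix (Fin n) (Fin n) ℂ) (k : ℕ)
    (hk : k = max (matIndex (A * W)) (matIndex (W * A))) (hY : IsCoreEP (W * A) Y) :
    (∃ S : Matrix (Fin m) (Fin m) ℂ, A * (Y * Y) = (A * W) ^ k * S * (A * (Y * Y))) ∧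
    (∃ T : Matrix (Fin n) (Fin n) ℂ, A * (Y * Y) = (A * (Y * Y)) * T * ((W * A) ^ k)ᴴ) ∧
    (A * (Y * Y)) * (W * A * W) * (A * W) ^ k = (A * W) ^ k ∧
    ((W * A) ^ k)ᴴ * (W * A * W) * (A * (Y * Y)) = ((W * A) ^ k)ᴴ := by
  have hAW : matIndex (A * W) ≤ k := hk ▸ le_max_left _ _
  have hWA : matIndex (W * A) ≤ k := hk ▸ le_max_right _ _
  exact ⟨hY.exists_weighted_eq_pow_mul_mul k, hY.exists_weighted_eq_mul_mul_pow_conjTranspose k,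
    hY.weighted_mul_mul_pow hWA hAW, hY.pow_conjTranspose_mul_mul_weighted hWA⟩
end
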